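/- In the braid group Br_{n+1}, the box relation ℓ_{i,k}⁻² ℓ_{i,j}² ℓ_{a,k}² ℓ_{j+2,p}² ℓ_{a,p}⁻² = ℓ_{a,p}⁻² ℓ_{j+2,p}² ℓ_{a,k}² ℓ_{i,j}² ℓ_{i,k}⁻² holds whenever 1 ≤ i < a ≤ j+1 ≤ k < p ≤ n. -/

import Mathlib

namespace BraidPaper

/-- The braid relations on `n` generators `s_1, ..., s_n` (indexed by `Fin n`):
far-away commutativity and the braid relation for adjacent generators.  The
corresponding presented group is the Artin braid group `Br_{n+1}`. -/
def braidRelsSet (n : ℕ) : Set (FreeGroup (Fin n)) :=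
  {r | (∃ i j : Fin n, (i : ℕ) + 2 ≤ (j : ℕ) ∧
        r = FreeGroup.of i * FreeGroup.of j * (FreeGroup.of i)⁻¹ * (FreeGroup.of j)⁻¹) ∨
       (∃ i j : Fin n, (i : ℕ) + 1 = (j : ℕ) ∧
        r = FreeGroup.of i * FreeGroup.of j * FreeGroup.of i *
            (FreeGroup.of j)⁻¹ * (FreeGroup.of i)⁻¹ * (FreeGroup.of j)⁻¹)}

/-- The Artin braid group `Br_{n+1}` on generators `s_1, ..., s_n`. -/
abbrev BraidGroup (n : ℕ) := PresentedGroup (braidRelsSet n)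

/-- The generator `s_i` of `Br_{n+1}`, for `1 ≤ i ≤ n` (junk value `1` otherwise). -/
def gen (n : ℕ) (i : ℕ) : BraidGroup n :=
  if h : 1 ≤ i ∧ i ≤ n then PresentedGroup.of (⟨i - 1, by omega⟩ : Fin n) else 1

/-- The descending product `s_j s_{j-1} ⋯ s_i` (equal to `1` if `j < i`). -/
def desc (n j i : ℕ) : BraidGroup n :=
  (((List.range' i (j + 1 - i)).reverse).map (gen n)).prod

/-- The ascending product `s_i s_{i+1} ⋯ s_j` (equal to `1` if `j < i`). -/
def asc (n i j : ℕ) : BraidGroup n :=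
  ((List.range' i (j + 1 - i)).map (gen n)).prod

/-- The standard lift `ℓ_{i,j} = (s_i)(s_{i+1}s_i)⋯(s_j⋯s_i)` of the longest element
over the interval `[i,j]`, with the convention `ℓ_{i,j} = 1` when `j < i`. -/
def ell (n i j : ℕ) : BraidGroup n :=
  ((List.range' i (j + 1 - i)).map (fun k => desc n k i)).prod

variable {n : ℕ}

/-! ### Basic facts about relations -/

lemma rel_one {r : FreeGroup (Fin n)} (h : r ∈ braidRelsSet n) :
    PresentedGroup.mk (braidRelsSet n) r = 1 :=
  (QuotientGroup.eq_one_iff r).mpr (Subgroup.subset_normalClosure h)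

lemma gen_junk {i : ℕ} (h : ¬(1 ≤ i ∧ i ≤ n)) : gen n i = 1 := dif_neg h

lemma gen_eq_of {i : ℕ} (h : 1 ≤ i ∧ i ≤ n) :
    gen n i = PresentedGroup.of (⟨i - 1, by omega⟩ : Fin n) := dif_pos h

lemma braid_comm {x y : ℕ} (h : x + 2 ≤ y) : Commute (gen n x) (gen n y) := by
  by_cases hx : 1 ≤ x ∧ x ≤ n
  · by_cases hy : 1 ≤ y ∧ y ≤ n
    · have hmem : (FreeGroup.of (⟨x - 1, by omega⟩ : Fin n) * FreeGroup.of (⟨y - 1, by omega⟩ : Fin n)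
          * (FreeGroup.of (⟨x - 1, by omega⟩ : Fin n))⁻¹ * (FreeGroup.of (⟨y - 1, by omega⟩ : Fin n))⁻¹)
          ∈ braidRelsSet n := by
        left
        exact ⟨⟨x - 1, by omega⟩, ⟨y - 1, by omega⟩, by simp; omega, rfl⟩
      have h1 := rel_one hmem
      simp only [map_mul, map_inv] at h1
      rw [gen_eq_of hx, gen_eq_of hy]
      have h2 : ∀ a b : BraidGroup n, a * b * a⁻¹ * b⁻¹ = 1 → Commute a b := by
        intro a b hab
        have : a * b = b * a := by
          have := congrArg (· * (b * a)) hab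
          simpa [mul_assoc] using this
        exact this
      exact h2 _ _ h1
    · rw [gen_junk hy]; exact Commute.one_right _
  · rw [gen_junk hx]; exact Commute.one_left _

lemma braid_rel {x : ℕ} (h1 : 1 ≤ x) (h2 : x + 1 ≤ n) :
    gen n x * gen n (x + 1) * gen n x = gen n (x + 1) * gen n x * gen n (x + 1) := by
  have hmem : (FreeGroup.of (⟨x - 1, by omega⟩ : Fin n) * FreeGroup.of (⟨x, by omega⟩ : Fin n)
      * FreeGroup.of (⟨x - 1, by omega⟩ : Fin n) * (FreeGroup.of (⟨x, by omega⟩ : Fin n))⁻¹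
      * (FreeGroup.of (⟨x - 1, by omega⟩ : Fin n))⁻¹ * (FreeGroup.of (⟨x, by omega⟩ : Fin n))⁻¹)
      ∈ braidRelsSet n := by
    right
    exact ⟨⟨x - 1, by omega⟩, ⟨x, by omega⟩, by simp; omega, rfl⟩
  have h1' := rel_one hmem
  simp only [map_mul, map_inv] at h1'
  rw [gen_eq_of ⟨h1, by omega⟩, gen_eq_of (i := x + 1) ⟨by omega, h2⟩]
  have : (⟨x + 1 - 1, by omega⟩ : Fin n) = ⟨x, by omega⟩ := by
    apply Fin.ext; simp
  rw [this]
  set a := PresentedGroup.of (rels := braidRelsSet n) (⟨x - 1, by omega⟩ : Fin n)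
  set b := PresentedGroup.of (rels := braidRelsSet n) (⟨x, by omega⟩ : Fin n)
  have h1'' : a * b * a * b⁻¹ * a⁻¹ * b⁻¹ = 1 := h1'
  have : a * b * a = ((a * b * a * b⁻¹ * a⁻¹ * b⁻¹) * b) * a * b := by group
  rw [this, h1'']; group
/-! ### Unfolding lemmas for `desc`, `asc`, `ell` -/

lemma desc_empty {j i : ℕ} (h : j < i) : desc n j i = 1 := by
  have : j + 1 - i = 0 := by omega
  simp [desc, this]

lemma asc_empty {i j : ℕ} (h : j < i) : asc n i j = 1 := by
  have : j + 1 - i = 0 := by omega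
  simp [asc, this]

lemma ell_empty {i j : ℕ} (h : j < i) : ell n i j = 1 := by
  have : j + 1 - i = 0 := by omega
  simp [ell, this]

lemma desc_succ {j i : ℕ} (h : i ≤ j + 1) : desc n (j + 1) i = gen n (j + 1) * desc n j i := by
  have h1 : j + 1 + 1 - i = (j + 1 - i) + 1 := by omega
  have h2 : i + (j + 1 - i) = j + 1 := by omega
  rw [desc, h1, List.range'_concat, desc]
  simp [h2]

lemma asc_succ {i j : ℕ} (h : i ≤ j + 1) : asc n i (j + 1) = asc n i j * gen n (j + 1) := by
  have h1 : j + 1 + 1 - i = (j + 1 - i) + 1 := by omega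
  have h2 : i + (j + 1 - i) = j + 1 := by omega
  rw [asc, h1, List.range'_concat, asc]
  simp [h2]

lemma asc_cons {i j : ℕ} (h : i ≤ j) : asc n i j = gen n i * asc n (i + 1) j := by
  have h1 : j + 1 - i = (j + 1 - (i + 1)) + 1 := by omega
  rw [asc, h1, List.range'_succ, asc]
  simp [mul_comm]

lemma desc_last {j i : ℕ} (h : i ≤ j) : desc n j i = desc n j (i + 1) * gen n i := by
  have h1 : j + 1 - i = (j + 1 - (i + 1)) + 1 := by omega
  rw [desc, h1, List.range'_succ, desc]
  simp

lemma ell_succ {i j : ℕ} (h : i ≤ j + 1) : ell n i (j + 1) = ell n i j * desc n (j + 1) i := by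
  have h1 : j + 1 + 1 - i = (j + 1 - i) + 1 := by omega
  have h2 : i + (j + 1 - i) = j + 1 := by omega
  rw [ell, h1, List.range'_concat, ell]
  simp [h2]

lemma desc_single (i : ℕ) : desc n i i = gen n i := by
  have h1 : i + 1 - i = 1 := by omega
  rw [desc, h1]
  simp

lemma asc_single (i : ℕ) : asc n i i = gen n i := by
  have h1 : i + 1 - i = 1 := by omega
  rw [asc, h1]
  simp

lemma ell_single (i : ℕ) : ell n i i = gen n i := by
  have h1 : i + 1 - i = 1 := by omega
  rw [ell, h1]
  simp [desc_single]

lemma desc_split {k q a : ℕ} (h0 : 1 ≤ q) (h1 : a ≤ q) (h2 : q ≤ k + 1) :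
    desc n k a = desc n k q * desc n (q - 1) a := by
  have hr : List.range' a (q - a) ++ List.range' q (k + 1 - q) = List.range' a (k + 1 - a) := by
    have := List.range'_append (s := a) (m := q - a) (n := k + 1 - q) (step := 1)
    rw [one_mul] at this
    have e1 : a + (q - a) = q := by omega
    have e2 : q - a + (k + 1 - q) = k + 1 - a := by omega
    rw [e1] at this; rw [e2] at this; exact this
  have hq : q - 1 + 1 - a = q - a := by omega
  rw [desc, desc, desc, hq, ← hr]
  simp

lemma asc_split {a q k : ℕ} (h0 : 1 ≤ q) (h1 : a ≤ q) (h2 : q ≤ k + 1) :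
    asc n a k = asc n a (q - 1) * asc n q k := by
  have hr : List.range' a (q - a) ++ List.range' q (k + 1 - q) = List.range' a (k + 1 - a) := by
    have := List.range'_append (s := a) (m := q - a) (n := k + 1 - q) (step := 1)
    rw [one_mul] at this
    have e1 : a + (q - a) = q := by omega
    have e2 : q - a + (k + 1 - q) = k + 1 - a := by omega
    rw [e1] at this; rw [e2] at this; exact this
  have hq : q - 1 + 1 - a = q - a := by omega
  rw [asc, asc, asc, hq, ← hr]
  simp

/-! ### Commutation machinery -/

lemma commute_desc {g : BraidGroup n} {j i : ℕ}
    (H : ∀ t, i ≤ t → t ≤ j → Commute g (gen n t)) : Commute g (desc n j i) := by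
  apply Commute.list_prod_right
  intro x hx
  simp only [List.mem_map, List.mem_reverse, List.mem_range'_1] at hx
  obtain ⟨t, ⟨ht1, ht2⟩, rfl⟩ := hx
  exact H t ht1 (by omega)

lemma commute_asc {g : BraidGroup n} {i j : ℕ}
    (H : ∀ t, i ≤ t → t ≤ j → Commute g (gen n t)) : Commute g (asc n i j) := by
  apply Commute.list_prod_right
  intro x hx
  simp only [List.mem_map, List.mem_range'_1] at hx
  obtain ⟨t, ⟨ht1, ht2⟩, rfl⟩ := hx
  exact H t ht1 (by omega)

lemma commute_ell {g : BraidGroup n} {i j : ℕ}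
    (H : ∀ t, i ≤ t → t ≤ j → Commute g (gen n t)) : Commute g (ell n i j) := by
  apply Commute.list_prod_right
  intro x hx
  simp only [List.mem_map, List.mem_range'_1] at hx
  obtain ⟨t, ⟨ht1, ht2⟩, rfl⟩ := hx
  exact commute_desc (fun s hs1 hs2 => H s hs1 (by omega))
/-! ### Far commutation -/

lemma gen_far_desc {m j i : ℕ} (h : j + 2 ≤ m ∨ m + 2 ≤ i) : Commute (gen n m) (desc n j i) :=
  commute_desc fun t ht1 ht2 => by
    rcases h with h | h
    · exact (braid_comm (by omega)).symm
    · exact braid_comm (by omega)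

lemma gen_far_asc {m i j : ℕ} (h : j + 2 ≤ m ∨ m + 2 ≤ i) : Commute (gen n m) (asc n i j) :=
  commute_asc fun t ht1 ht2 => by
    rcases h with h | h
    · exact (braid_comm (by omega)).symm
    · exact braid_comm (by omega)

lemma gen_far_ell {m i j : ℕ} (h : j + 2 ≤ m ∨ m + 2 ≤ i) : Commute (gen n m) (ell n i j) :=
  commute_ell fun t ht1 ht2 => by
    rcases h with h | h
    · exact (braid_comm (by omega)).symm
    · exact braid_comm (by omega)

/-! ### Shift lemmas -/

lemma asc_gen : ∀ {y : ℕ}, y ≤ n → ∀ {x m : ℕ}, 1 ≤ x → x ≤ m → m + 1 ≤ y →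
    asc n x y * gen n m = gen n (m + 1) * asc n x y := by
  intro y
  induction y with
  | zero => intro _ x m _ _ h; omega
  | succ y ih =>
    intro hyn x m hx hxm hmy
    by_cases hc : m + 1 ≤ y
    · have hcomm : Commute (gen n m) (gen n (y + 1)) := braid_comm (by omega)
      calc asc n x (y + 1) * gen n m
          = asc n x y * (gen n (y + 1) * gen n m) := by rw [asc_succ (by omega)]; group
        _ = asc n x y * gen n m * gen n (y + 1) := by rw [← hcomm.eq]; group
        _ = gen n (m + 1) * asc n x y * gen n (y + 1) := by rw [ih (by omega) hx hxm hc]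
        _ = gen n (m + 1) * asc n x (y + 1) := by rw [asc_succ (i := x) (j := y) (by omega)]; group
    · have hm : m = y := by omega
      subst hm
      have e1 : asc n x (m + 1) = asc n x m * gen n (m + 1) := asc_succ (by omega)
      have e2 : asc n x m = asc n x (m - 1) * gen n m := by
        have := asc_succ (n := n) (i := x) (j := m - 1) (by omega)
        have hm1 : m - 1 + 1 = m := by omega
        rwa [hm1] at this
      have hbr := braid_rel (n := n) (x := m) (by omega) (by omega)
      have hfar : Commute (gen n (m + 1)) (asc n x (m - 1)) :=
        gen_far_asc (Or.inl (by omega))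
      calc asc n x (m + 1) * gen n m
          = asc n x (m - 1) * (gen n m * gen n (m + 1) * gen n m) := by
            rw [e1, e2]; group
        _ = asc n x (m - 1) * (gen n (m + 1) * gen n m * gen n (m + 1)) := by rw [hbr]
        _ = asc n x (m - 1) * gen n (m + 1) * (gen n m * gen n (m + 1)) := by group
        _ = gen n (m + 1) * asc n x (m - 1) * (gen n m * gen n (m + 1)) := by
            rw [← hfar.eq]
        _ = gen n (m + 1) * asc n x (m + 1) := by rw [e1, e2]; group

lemma desc_gen : ∀ {y : ℕ}, y ≤ n → ∀ {x m : ℕ}, 1 ≤ x → x + 1 ≤ m → m ≤ y →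
    desc n y x * gen n m = gen n (m - 1) * desc n y x := by
  intro y
  induction y with
  | zero => intro _ x m _ _ h; omega
  | succ y ih =>
    intro hyn x m hx hxm hmy
    by_cases hc : m ≤ y
    · rw [desc_succ (by omega)]
      have hcomm : Commute (gen n (m - 1)) (gen n (y + 1)) := braid_comm (by omega)
      calc gen n (y + 1) * desc n y x * gen n m
          = gen n (y + 1) * (desc n y x * gen n m) := by rw [mul_assoc]
        _ = gen n (y + 1) * (gen n (m - 1) * desc n y x) := by rw [ih (by omega) hx hxm hc]
        _ = gen n (m - 1) * (gen n (y + 1) * desc n y x) := by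
            rw [← mul_assoc, ← hcomm.eq, mul_assoc]
    · have hm : m = y + 1 := by omega
      subst hm
      have e1 : desc n (y + 1) x = gen n (y + 1) * desc n y x := desc_succ (by omega)
      have e2 : desc n y x = gen n y * desc n (y - 1) x := by
        have := desc_succ (n := n) (j := y - 1) (i := x) (by omega)
        have hy1 : y - 1 + 1 = y := by omega
        rwa [hy1] at this
      have hbr := braid_rel (n := n) (x := y) (by omega) (by omega)
      have hfar : Commute (gen n (y + 1)) (desc n (y - 1) x) :=
        gen_far_desc (Or.inl (by omega))
      have hm1 : y + 1 - 1 = y := by omega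
      rw [hm1, e1, e2]
      calc gen n (y + 1) * (gen n y * desc n (y - 1) x) * gen n (y + 1)
          = gen n (y + 1) * gen n y * (desc n (y - 1) x * gen n (y + 1)) := by group
        _ = gen n (y + 1) * gen n y * (gen n (y + 1) * desc n (y - 1) x) := by rw [← hfar.eq]
        _ = gen n (y + 1) * gen n y * gen n (y + 1) * desc n (y - 1) x := by group
        _ = gen n y * gen n (y + 1) * gen n y * desc n (y - 1) x := by rw [← hbr]
        _ = gen n y * (gen n (y + 1) * (gen n y * desc n (y - 1) x)) := by group

/-! ### The exchange identity W -/

lemma W_aux : ∀ (t : ℕ) {x y : ℕ}, y = x + t → 1 ≤ x → y ≤ n →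
    asc n x (y - 1) * desc n y x = desc n y (x + 1) * asc n x y := by
  intro t
  induction t with
  | zero =>
    intro x y hy hx hyn
    have hy' : y = x := by omega
    subst hy'
    rw [asc_empty (show y - 1 < y by omega), desc_empty (show y < y + 1 by omega),
      desc_single, asc_single]
  | succ t ih =>
    intro x y hy hx hyn
    have hxy : x + 1 ≤ y := by omega
    have e1 : asc n x (y - 1) = gen n x * asc n (x + 1) (y - 1) := by
      by_cases h : x ≤ y - 1
      · exact asc_cons h
      · have : y = x + 1 := by omega
        rw [this]; simp only [Nat.add_sub_cancel]
        rw [asc_single, asc_empty (by omega), mul_one]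
    have e2 : desc n y x = desc n y (x + 1) * gen n x := desc_last (by omega)
    have ihx := ih (x := x + 1) (y := y) (by omega) (by omega) hyn
    have e3 : asc n (x + 1) y = gen n (x + 1) * asc n (x + 2) y := asc_cons (by omega)
    have f1 : Commute (gen n x) (desc n y (x + 2)) := gen_far_desc (Or.inr (by omega))
    have f2 : Commute (gen n x) (asc n (x + 2) y) := gen_far_asc (Or.inr (by omega))
    have hbr := braid_rel (n := n) (x := x) (by omega) (by omega)
    have e4 : desc n y (x + 1) = desc n y (x + 2) * gen n (x + 1) := desc_last (by omega)
    calc asc n x (y - 1) * desc n y x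
        = gen n x * (asc n (x + 1) (y - 1) * desc n y (x + 1)) * gen n x := by
          rw [e1, e2]; group
      _ = gen n x * (desc n y (x + 2) * asc n (x + 1) y) * gen n x := by rw [ihx]
      _ = gen n x * (desc n y (x + 2) * (gen n (x + 1) * asc n (x + 2) y)) * gen n x := by
          rw [e3]
      _ = desc n y (x + 2) * (gen n x * gen n (x + 1) * (asc n (x + 2) y * gen n x)) := by
          rw [← mul_assoc, ← mul_assoc, f1.eq]; group
      _ = desc n y (x + 2) * (gen n x * gen n (x + 1) * (gen n x * asc n (x + 2) y)) := by
          rw [← f2.eq]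
      _ = desc n y (x + 2) * (gen n x * gen n (x + 1) * gen n x) * asc n (x + 2) y := by
          group
      _ = desc n y (x + 2) * (gen n (x + 1) * gen n x * gen n (x + 1)) * asc n (x + 2) y := by
          rw [hbr]
      _ = (desc n y (x + 2) * gen n (x + 1)) * gen n x * (gen n (x + 1) * asc n (x + 2) y) := by
          group
      _ = desc n y (x + 1) * (gen n x * asc n (x + 1) y) := by rw [← e4, ← e3]; group
      _ = desc n y (x + 1) * asc n x y := by rw [← asc_cons (by omega)]

lemma W {x y : ℕ} (hx : 1 ≤ x) (hxy : x ≤ y) (hyn : y ≤ n) :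
    asc n x (y - 1) * desc n y x = desc n y (x + 1) * asc n x y :=
  W_aux (y - x) (by omega) hx hyn

/-! ### Recursions for `ell` -/

lemma ell_key_aux : ∀ (t : ℕ) {x y : ℕ}, y = x + t → 1 ≤ x → y ≤ n →
    ell n x y = asc n x y * ell n x (y - 1) := by
  intro t
  induction t with
  | zero =>
    intro x y hy hx hyn
    have hy' : y = x := by omega
    subst hy'
    rw [ell_single, asc_single, ell_empty (show y - 1 < y by omega), mul_one]
  | succ t ih =>
    intro x y hy hx hyn
    obtain ⟨z, rfl⟩ : ∃ z, y = z + 1 := ⟨x + t, by omega⟩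
    have hxz : x ≤ z := by omega
    have e1 : ell n x (z + 1) = ell n x z * desc n (z + 1) x := ell_succ (by omega)
    have e2 : ell n x z = asc n x z * ell n x (z - 1) := ih (by omega) hx (by omega)
    have e3 : desc n (z + 1) x = gen n (z + 1) * desc n z x := desc_succ (by omega)
    have f1 : Commute (gen n (z + 1)) (ell n x (z - 1)) := gen_far_ell (Or.inl (by omega))
    have e4 : ell n x z = ell n x (z - 1) * desc n z x := by
      by_cases h : x ≤ z - 1
      · have := ell_succ (n := n) (i := x) (j := z - 1) (by omega)
        have hz : z - 1 + 1 = z := by omega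
        rwa [hz] at this
      · have h1 : ell n x (z - 1) = 1 := ell_empty (by omega)
        have hz : z = x := by omega
        rw [h1, one_mul, hz, ell_single, desc_single]
    have hs : z + 1 - 1 = z := by omega
    rw [hs]
    calc ell n x (z + 1)
        = asc n x z * (ell n x (z - 1) * gen n (z + 1)) * desc n z x := by
          rw [e1, e2, e3]; group
      _ = asc n x z * (gen n (z + 1) * ell n x (z - 1)) * desc n z x := by rw [f1.eq]
      _ = (asc n x z * gen n (z + 1)) * (ell n x (z - 1) * desc n z x) := by group
      _ = asc n x (z + 1) * ell n x z := by rw [← asc_succ (by omega), ← e4]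

lemma ell_key {x y : ℕ} (hx : 1 ≤ x) (hxy : x ≤ y) (hyn : y ≤ n) :
    ell n x y = asc n x y * ell n x (y - 1) :=
  ell_key_aux (y - x) (by omega) hx hyn

lemma ell_R_aux : ∀ (t : ℕ) {x y : ℕ}, y = x + t → 1 ≤ x → y ≤ n →
    ell n x y = ell n (x + 1) y * asc n x y := by
  intro t
  induction t with
  | zero =>
    intro x y hy hx hyn
    have hy' : y = x := by omega
    subst hy'
    rw [ell_single, ell_empty (show y < y + 1 by omega), asc_single, one_mul]
  | succ t ih =>
    intro x y hy hx hyn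
    obtain ⟨z, rfl⟩ : ∃ z, y = z + 1 := ⟨x + t, by omega⟩
    have hxz : x ≤ z := by omega
    have e1 : ell n x (z + 1) = ell n x z * desc n (z + 1) x := ell_succ (by omega)
    have e2 : ell n x z = ell n (x + 1) z * asc n x z := ih (by omega) hx (by omega)
    have hW := W (n := n) (x := x) (y := z + 1) hx (by omega) hyn
    have hs : z + 1 - 1 = z := by omega
    rw [hs] at hW
    calc ell n x (z + 1) = ell n (x + 1) z * (asc n x z * desc n (z + 1) x) := by
          rw [e1, e2]; group
      _ = ell n (x + 1) z * (desc n (z + 1) (x + 1) * asc n x (z + 1)) := by rw [hW]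
      _ = (ell n (x + 1) z * desc n (z + 1) (x + 1)) * asc n x (z + 1) := by group
      _ = ell n (x + 1) (z + 1) * asc n x (z + 1) := by rw [← ell_succ (by omega)]

lemma ell_R {x y : ℕ} (hx : 1 ≤ x) (hxy : x ≤ y) (hyn : y ≤ n) :
    ell n x y = ell n (x + 1) y * asc n x y :=
  ell_R_aux (y - x) (by omega) hx hyn

/-! ### Conjugation of generators by `ell` (the flip) -/

lemma ell_gen_aux : ∀ (t : ℕ) {x y : ℕ}, y = x + t → 1 ≤ x → y ≤ n → ∀ {m : ℕ}, x ≤ m → m ≤ y →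
    ell n x y * gen n m = gen n (x + y - m) * ell n x y := by
  intro t
  induction t with
  | zero =>
    intro x y hy hx hyn m hxm hmy
    have hy' : y = x := by omega
    subst hy'
    have hm : m = y := by omega
    subst hm
    have hxx : m + m - m = m := by omega
    rw [hxx, ell_single]
  | succ t ih =>
    intro x y hy hx hyn m hxm hmy
    obtain ⟨z, rfl⟩ : ∃ z, y = z + 1 := ⟨x + t, by omega⟩
    have hxz : x ≤ z := by omega
    by_cases hc : x + 1 ≤ m
    · have e1 : ell n x (z + 1) = ell n x z * desc n (z + 1) x := ell_succ (by omega)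
      have e2 : desc n (z + 1) x * gen n m = gen n (m - 1) * desc n (z + 1) x :=
        desc_gen hyn hx hc hmy
      have e3 : ell n x z * gen n (m - 1) = gen n (x + z - (m - 1)) * ell n x z :=
        ih (by omega) hx (by omega) (by omega) (by omega)
      have e4 : x + z - (m - 1) = x + (z + 1) - m := by omega
      rw [e1, mul_assoc, e2, ← mul_assoc, e3, e4, mul_assoc]
    · have hm : m = x := by omega
      subst hm
      have e1 : ell n m (z + 1) = asc n m (z + 1) * ell n m z := by
        have := ell_key (n := n) (x := m) (y := z + 1) hx (by omega) hyn
        have hs : z + 1 - 1 = z := by omega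
        rwa [hs] at this
      have e2 : ell n m z * gen n m = gen n (m + z - m) * ell n m z :=
        ih (by omega) hx (by omega) (le_refl m) hxz
      have e3 : m + z - m = z := by omega
      have e4 : asc n m (z + 1) * gen n z = gen n (z + 1) * asc n m (z + 1) :=
        asc_gen hyn hx hxz (by omega)
      have e5 : m + (z + 1) - m = z + 1 := by omega
      rw [e5, e1, mul_assoc, e2, e3, ← mul_assoc, e4, mul_assoc]

lemma ell_gen {x y m : ℕ} (hx : 1 ≤ x) (hyn : y ≤ n) (hxm : x ≤ m) (hmy : m ≤ y) :
    ell n x y * gen n m = gen n (x + y - m) * ell n x y :=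
  ell_gen_aux (y - x) (by omega) hx hyn hxm hmy

/-! ### Centrality of the full twist -/

lemma sq_ell_gen {x y m : ℕ} (hx : 1 ≤ x) (hyn : y ≤ n) (hxm : x ≤ m) (hmy : m ≤ y) :
    Commute (ell n x y ^ 2) (gen n m) := by
  have e1 := ell_gen (n := n) hx hyn hxm hmy
  have e2 := ell_gen (n := n) (m := x + y - m) hx hyn (by omega) (by omega)
  have e3 : x + y - (x + y - m) = m := by omega
  rw [e3] at e2
  unfold Commute SemiconjBy
  rw [pow_two]
  calc ell n x y * ell n x y * gen n m
      = ell n x y * (ell n x y * gen n m) := by rw [mul_assoc]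
    _ = ell n x y * (gen n (x + y - m) * ell n x y) := by rw [e1]
    _ = (ell n x y * gen n (x + y - m)) * ell n x y := by rw [mul_assoc]
    _ = gen n m * ell n x y * ell n x y := by rw [e2]
    _ = gen n m * (ell n x y * ell n x y) := by rw [mul_assoc]

lemma sq_ell_comm_ell {x y u v : ℕ} (hx : 1 ≤ x) (hyn : y ≤ n) (hu : x ≤ u) (hv : v ≤ y) :
    Commute (ell n x y ^ 2) (ell n u v) :=
  commute_ell fun t ht1 ht2 => sq_ell_gen hx hyn (by omega) (by omega)

lemma sq_ell_comm_asc {x y u v : ℕ} (hx : 1 ≤ x) (hyn : y ≤ n) (hu : x ≤ u) (hv : v ≤ y) :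
    Commute (ell n x y ^ 2) (asc n u v) :=
  commute_asc fun t ht1 ht2 => sq_ell_gen hx hyn (by omega) (by omega)

lemma sq_ell_comm_desc {x y u v : ℕ} (hx : 1 ≤ x) (hyn : y ≤ n) (hu : x ≤ u) (hv : v ≤ y) :
    Commute (ell n x y ^ 2) (desc n v u) :=
  commute_desc fun t ht1 ht2 => sq_ell_gen hx hyn (by omega) (by omega)

lemma ell_comm_far {x y u v : ℕ} (h : y + 2 ≤ u) : Commute (ell n x y) (ell n u v) := by
  apply commute_ell
  intro t ht1 ht2
  exact (gen_far_ell (m := t) (i := x) (j := y) (Or.inl (by omega))).symm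
/-! ### The mirror automorphism -/

def phiMap (n : ℕ) : Fin n → BraidGroup n := fun i => gen n (n - (i : ℕ))

lemma phi_rels : ∀ r ∈ braidRelsSet n, FreeGroup.lift (phiMap n) r = 1 := by
  intro r hr
  rcases hr with ⟨i, j, hij, rfl⟩ | ⟨i, j, hij, rfl⟩
  · have h1 : (i : ℕ) < n := i.isLt
    have h2 : (j : ℕ) < n := j.isLt
    simp only [map_mul, map_inv, FreeGroup.lift_apply_of, phiMap]
    have hc : Commute (gen n (n - (j : ℕ))) (gen n (n - (i : ℕ))) := braid_comm (by omega)
    rw [← hc.eq]; group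
  · have h1 : (i : ℕ) < n := i.isLt
    have h2 : (j : ℕ) < n := j.isLt
    simp only [map_mul, map_inv, FreeGroup.lift_apply_of, phiMap]
    set a := gen n (n - (i : ℕ)) with ha
    set b := gen n (n - (j : ℕ)) with hb
    have hbr : b * a * b = a * b * a := by
      have := braid_rel (n := n) (x := n - (j : ℕ)) (by omega) (by omega)
      have e : n - (j : ℕ) + 1 = n - (i : ℕ) := by omega
      rw [e] at this
      rw [ha, hb, this]
    have : a * b * a * b⁻¹ * a⁻¹ * b⁻¹ = (a * b * a) * (b * a * b)⁻¹ := by group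
    rw [this, ← hbr]; group

def phi : BraidGroup n →* BraidGroup n := PresentedGroup.toGroup (phi_rels (n := n))

lemma phi_gen (m : ℕ) : phi (gen n m) = gen n (n + 1 - m) := by
  by_cases h : 1 ≤ m ∧ m ≤ n
  · rw [gen_eq_of h]
    show PresentedGroup.toGroup (phi_rels (n := n)) (PresentedGroup.of _) = _
    rw [PresentedGroup.toGroup.of]
    show gen n (n - (m - 1)) = gen n (n + 1 - m)
    congr 1
    omega
  · rw [gen_junk h, map_one, gen_junk (by omega)]

lemma phi_desc : ∀ {j i : ℕ}, 1 ≤ i → j ≤ n →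
    phi (desc n j i) = asc n (n + 1 - j) (n + 1 - i) := by
  intro j
  induction j with
  | zero =>
    intro i hi hj
    rw [desc_empty (by omega), map_one, asc_empty (by omega)]
  | succ j ih =>
    intro i hi hj
    by_cases h : i ≤ j + 1
    · rw [desc_succ h, map_mul, phi_gen, ih hi (by omega)]
      have e : n + 1 - (j + 1) = n - j := by omega
      rw [e]
      have := asc_cons (n := n) (i := n - j) (j := n + 1 - i) (by omega)
      have e2 : n - j + 1 = n + 1 - j := by omega
      rw [e2] at this
      rw [← this]
    · rw [desc_empty (by omega), map_one, asc_empty (by omega)]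

lemma phi_asc : ∀ {j i : ℕ}, 1 ≤ i → j ≤ n →
    phi (asc n i j) = desc n (n + 1 - i) (n + 1 - j) := by
  intro j
  induction j with
  | zero =>
    intro i hi hj
    rw [asc_empty (by omega), map_one, desc_empty (by omega)]
  | succ j ih =>
    intro i hi hj
    by_cases h : i ≤ j + 1
    · by_cases h2 : i ≤ j
      · rw [asc_succ h, map_mul, phi_gen, ih hi (by omega)]
        have e : n + 1 - (j + 1) = n - j := by omega
        rw [e]
        have := desc_last (n := n) (j := n + 1 - i) (i := n - j) (by omega)
        have e2 : n - j + 1 = n + 1 - j := by omega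
        rw [e2] at this
        rw [← this]
      · have hij : i = j + 1 := by omega
        subst hij
        rw [asc_single, phi_gen, desc_single]
    · rw [asc_empty (by omega), map_one, desc_empty (by omega)]

lemma phi_ell : ∀ {j i : ℕ}, 1 ≤ i → j ≤ n →
    phi (ell n i j) = ell n (n + 1 - j) (n + 1 - i) := by
  intro j
  induction j with
  | zero =>
    intro i hi hj
    rw [ell_empty (by omega), map_one, ell_empty (by omega)]
  | succ j ih =>
    intro i hi hj
    by_cases h : i ≤ j + 1
    · rw [ell_succ h, map_mul, phi_desc hi hj, ih hi (by omega)]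
      have e : n + 1 - (j + 1) = n - j := by omega
      rw [e]
      have := ell_R (n := n) (x := n - j) (y := n + 1 - i) (by omega) (by omega) (by omega)
      have e2 : n - j + 1 = n + 1 - j := by omega
      rw [e2] at this
      rw [← this]
    · rw [ell_empty (by omega), map_one, ell_empty (by omega)]

/-- The mirror of `ell_key`: `ℓ_{x,y} = (s_y ⋯ s_x) ℓ_{x+1,y}`. -/
lemma ell_key' {x y : ℕ} (hx : 1 ≤ x) (hxy : x ≤ y) (hyn : y ≤ n) :
    ell n x y = desc n y x * ell n (x + 1) y := by
  have hk := ell_key (n := n) (x := n + 1 - y) (y := n + 1 - x) (by omega) (by omega) (by omega)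
  have := congrArg phi hk
  rw [map_mul, phi_ell (by omega) (by omega), phi_asc (by omega) (by omega)] at this
  have e0 : n + 1 - x - 1 = n - x := by omega
  rw [e0, phi_ell (by omega) (by omega)] at this
  have e1 : n + 1 - (n + 1 - x) = x := by omega
  have e2 : n + 1 - (n + 1 - y) = y := by omega
  have e3 : n + 1 - (n - x) = x + 1 := by omega
  rw [e1, e2, e3] at this
  exact this

/-! ### Conjugation of words by `ell` -/

lemma ell_desc : ∀ (t : ℕ) {x z u v : ℕ}, v = u + t → 1 ≤ x → z ≤ n → x ≤ u → v ≤ z →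
    ell n x z * desc n v u = asc n (x + z - v) (x + z - u) * ell n x z := by
  intro t
  induction t with
  | zero =>
    intro x z u v hv hx hz hxu hvz
    have hv' : v = u := by omega
    subst hv'
    rw [desc_single, asc_single, ell_gen hx hz hxu hvz]
  | succ t ih =>
    intro x z u v hv hx hz hxu hvz
    obtain ⟨w, rfl⟩ : ∃ w, v = w + 1 := ⟨u + t, by omega⟩
    rw [desc_succ (by omega), ← mul_assoc, ell_gen hx hz (by omega) hvz, mul_assoc,
      ih (by omega) hx hz hxu (by omega), ← mul_assoc]
    congr 1
    have := asc_cons (n := n) (i := x + z - (w + 1)) (j := x + z - u) (by omega)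
    have e : x + z - (w + 1) + 1 = x + z - w := by omega
    rw [e] at this
    rw [← this]

lemma ell_asc : ∀ (t : ℕ) {x z u v : ℕ}, v = u + t → 1 ≤ x → z ≤ n → x ≤ u → v ≤ z →
    ell n x z * asc n u v = desc n (x + z - u) (x + z - v) * ell n x z := by
  intro t
  induction t with
  | zero =>
    intro x z u v hv hx hz hxu hvz
    have hv' : v = u := by omega
    subst hv'
    rw [asc_single, desc_single, ell_gen hx hz hxu hvz]
  | succ t ih =>
    intro x z u v hv hx hz hxu hvz
    rw [asc_cons (by omega), ← mul_assoc, ell_gen hx hz hxu (by omega), mul_assoc,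
      ih (by omega) hx hz (by omega) hvz, ← mul_assoc]
    congr 1
    have := desc_succ (n := n) (j := x + z - u - 1) (i := x + z - v) (by omega)
    have e : x + z - u - 1 + 1 = x + z - u := by omega
    rw [e] at this
    have e2 : x + z - u - 1 = x + z - (u + 1) := by omega
    rw [e2] at this
    rw [← this]

/-- FLIP: conjugating a nested `ell` by `ell` flips the interval. -/
lemma ell_flip : ∀ (t : ℕ) {x z u v : ℕ}, v = u + t → 1 ≤ x → z ≤ n → x ≤ u → v ≤ z →
    ell n x z * ell n u v = ell n (x + z - v) (x + z - u) * ell n x z := by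
  intro t
  induction t with
  | zero =>
    intro x z u v hv hx hz hxu hvz
    have hv' : v = u := by omega
    subst hv'
    rw [ell_single, ell_single, ell_gen hx hz hxu hvz]
  | succ t ih =>
    intro x z u v hv hx hz hxu hvz
    obtain ⟨w, rfl⟩ : ∃ w, v = w + 1 := ⟨u + t, by omega⟩
    rw [ell_succ (by omega), ← mul_assoc, ih (by omega) hx hz hxu (by omega), mul_assoc,
      ell_desc (w + 1 - u) (by omega) hx hz hxu hvz, ← mul_assoc]
    congr 1
    have := ell_R (n := n) (x := x + z - (w + 1)) (y := x + z - u) (by omega) (by omega)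
      (by omega)
    have e : x + z - (w + 1) + 1 = x + z - w := by omega
    rw [e] at this
    rw [← this]

/-- FLIP with possibly-empty interval. -/
lemma ell_flip' {x z u v : ℕ} (hx : 1 ≤ x) (hz : z ≤ n) (hxu : x ≤ u) (hvz : v ≤ z)
    (huv : u ≤ v + 1) :
    ell n x z * ell n u v = ell n (x + z - v) (x + z - u) * ell n x z := by
  by_cases h : u ≤ v
  · exact ell_flip (v - u) (by omega) hx hz hxu hvz
  · rw [ell_empty (i := u) (j := v) (by omega),
      ell_empty (i := x + z - v) (j := x + z - u) (by omega), one_mul, mul_one]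

lemma ell_flip_sq {x z u v : ℕ} (hx : 1 ≤ x) (hz : z ≤ n) (hxu : x ≤ u) (hvz : v ≤ z)
    (huv : u ≤ v + 1) :
    ell n x z * ell n u v ^ 2 = ell n (x + z - v) (x + z - u) ^ 2 * ell n x z := by
  rw [pow_two, pow_two, ← mul_assoc, ell_flip' hx hz hxu hvz huv, mul_assoc,
    ell_flip' hx hz hxu hvz huv, ← mul_assoc]

/-! ### Shifting by ascending runs -/

lemma asc_desc : ∀ (t : ℕ) {a k u v : ℕ}, v = u + t → 1 ≤ a → k ≤ n → a ≤ u → v + 1 ≤ k →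
    asc n a k * desc n v u = desc n (v + 1) (u + 1) * asc n a k := by
  intro t
  induction t with
  | zero =>
    intro a k u v hv ha hk hau hvk
    have hv' : v = u := by omega
    subst hv'
    rw [desc_single, desc_single, asc_gen hk ha hau hvk]
  | succ t ih =>
    intro a k u v hv ha hk hau hvk
    obtain ⟨w, rfl⟩ : ∃ w, v = w + 1 := ⟨u + t, by omega⟩
    rw [desc_succ (by omega), ← mul_assoc, asc_gen hk ha (by omega) hvk, mul_assoc,
      ih (by omega) ha hk hau (by omega), ← mul_assoc, ← desc_succ (by omega)]

lemma asc_ell : ∀ (t : ℕ) {a k x y : ℕ}, y = x + t → 1 ≤ a → k ≤ n → a ≤ x → y + 1 ≤ k →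
    asc n a k * ell n x y = ell n (x + 1) (y + 1) * asc n a k := by
  intro t
  induction t with
  | zero =>
    intro a k x y hy ha hk hax hyk
    have hy' : y = x := by omega
    subst hy'
    rw [ell_single, ell_single, asc_gen hk ha hax hyk]
  | succ t ih =>
    intro a k x y hy ha hk hax hyk
    obtain ⟨w, rfl⟩ : ∃ w, y = w + 1 := ⟨x + t, by omega⟩
    rw [ell_succ (by omega), ← mul_assoc, ih (by omega) ha hk hax (by omega), mul_assoc,
      asc_desc (w + 1 - x) (by omega) ha hk hax hyk, ← mul_assoc, ← ell_succ (by omega)]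

lemma asc_ell' {a k x y : ℕ} (ha : 1 ≤ a) (hk : k ≤ n) (hax : a ≤ x) (hyk : y + 1 ≤ k)
    (hxy : x ≤ y + 2) :
    asc n a k * ell n x y = ell n (x + 1) (y + 1) * asc n a k := by
  by_cases h : x ≤ y
  · exact asc_ell (y - x) (by omega) ha hk hax hyk
  · rw [ell_empty (i := x) (j := y) (by omega),
      ell_empty (i := x + 1) (j := y + 1) (by omega), one_mul, mul_one]

lemma asc_ell_sq {a k x y : ℕ} (ha : 1 ≤ a) (hk : k ≤ n) (hax : a ≤ x) (hyk : y + 1 ≤ k)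
    (hxy : x ≤ y + 2) :
    asc n a k * ell n x y ^ 2 = ell n (x + 1) (y + 1) ^ 2 * asc n a k := by
  rw [pow_two, pow_two, ← mul_assoc, asc_ell' ha hk hax hyk hxy, mul_assoc,
    asc_ell' ha hk hax hyk hxy, ← mul_assoc]

/-! ### Band identities -/

lemma MBAND {x y : ℕ} (hx : 1 ≤ x) (hxy : x ≤ y) (hyn : y ≤ n) :
    ell n x y ^ 2 = desc n y x * asc n x y * ell n x (y - 1) ^ 2 := by
  have hKEY := ell_key hx hxy hyn
  have hCAE : ell n x y * asc n x y = desc n y x * ell n x y := by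
    have := ell_asc (y - x) (x := x) (z := y) (u := x) (v := y) (by omega) hx hyn le_rfl le_rfl
    rwa [show x + y - x = y by omega, show x + y - y = x by omega] at this
  calc ell n x y ^ 2 = ell n x y * ell n x y := by rw [pow_two]
    _ = ell n x y * (asc n x y * ell n x (y - 1)) := by nth_rewrite 2 [hKEY]; rfl
    _ = (desc n y x * ell n x y) * ell n x (y - 1) := by rw [← mul_assoc, hCAE]
    _ = desc n y x * (asc n x y * ell n x (y - 1)) * ell n x (y - 1) := by rw [← hKEY]
    _ = desc n y x * asc n x y * ell n x (y - 1) ^ 2 := by rw [pow_two]; group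

lemma BAND {x y : ℕ} (hx : 1 ≤ x) (hxy : x ≤ y) (hyn : y ≤ n) :
    ell n x y ^ 2 = asc n x y * desc n y x * ell n (x + 1) y ^ 2 := by
  have hK' := ell_key' hx hxy hyn
  have hCDE : ell n x y * desc n y x = asc n x y * ell n x y := by
    have := ell_desc (y - x) (x := x) (z := y) (u := x) (v := y) (by omega) hx hyn le_rfl le_rfl
    rwa [show x + y - x = y by omega, show x + y - y = x by omega] at this
  calc ell n x y ^ 2 = ell n x y * ell n x y := by rw [pow_two]
    _ = ell n x y * (desc n y x * ell n (x + 1) y) := by nth_rewrite 2 [hK']; rfl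
    _ = (asc n x y * ell n x y) * ell n (x + 1) y := by rw [← mul_assoc, hCDE]
    _ = asc n x y * (desc n y x * ell n (x + 1) y) * ell n (x + 1) y := by rw [← hK']
    _ = asc n x y * desc n y x * ell n (x + 1) y ^ 2 := by rw [pow_two]; group
/-! ### Commutation between full twists -/

lemma comm_sq_sq_nested {x y u v : ℕ} (hx : 1 ≤ x) (hyn : y ≤ n) (hu : x ≤ u) (hv : v ≤ y) :
    Commute (ell n x y ^ 2) (ell n u v ^ 2) :=
  (sq_ell_comm_ell hx hyn hu hv).pow_right 2

lemma comm_sq_sq_far {x y u v : ℕ} (h : y + 2 ≤ u) :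
    Commute (ell n x y ^ 2) (ell n u v ^ 2) :=
  ((ell_comm_far h).pow_left 2).pow_right 2

lemma comm_gen_sq_far {m x y : ℕ} (h : y + 2 ≤ m ∨ m + 2 ≤ x) :
    Commute (gen n m) (ell n x y ^ 2) :=
  (gen_far_ell h).pow_right 2

/-! ### The ladder lemma -/

lemma LADD : ∀ (t : ℕ) {i q k : ℕ}, k = q + t → 1 ≤ i → i < q → k ≤ n →
    asc n q k * ell n i (k - 1) ^ 2 * (ell n i (q - 2) ^ 2)⁻¹ * desc n k q =
      ell n i k ^ 2 * (ell n i (q - 1) ^ 2)⁻¹ := by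
  intro t
  induction t with
  | zero =>
    intro i q k hk hi hiq hkn
    have hq : q = k := by omega
    subst hq
    have h1 : ell n i q ^ 2 = desc n q i * asc n i q * ell n i (q - 1) ^ 2 :=
      MBAND hi (by omega) hkn
    have h2 : ell n i (q - 1) ^ 2 = desc n (q - 1) i * asc n i (q - 1) * ell n i (q - 2) ^ 2 := by
      have := MBAND (n := n) (x := i) (y := q - 1) hi (by omega) (by omega)
      rwa [show q - 1 - 1 = q - 2 by omega] at this
    have e1 : desc n q i = gen n q * desc n (q - 1) i := by
      have := desc_succ (n := n) (j := q - 1) (i := i) (by omega)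
      rwa [show q - 1 + 1 = q by omega] at this
    have e2 : asc n i q = asc n i (q - 1) * gen n q := by
      have := asc_succ (n := n) (i := i) (j := q - 1) (by omega)
      rwa [show q - 1 + 1 = q by omega] at this
    have L : asc n q q * ell n i (q - 1) ^ 2 * (ell n i (q - 2) ^ 2)⁻¹ * desc n q q =
        desc n q i * asc n i q := by
      rw [asc_single, desc_single, h2, e1, e2]; group
    have R : ell n i q ^ 2 * (ell n i (q - 1) ^ 2)⁻¹ = desc n q i * asc n i q := by
      rw [h1]; group
    rw [L, R]
  | succ t ih =>
    intro i q k hk hi hiq hkn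
    have hqk : q + 1 ≤ k := by omega
    have eA : asc n q k = asc n q (k - 1) * gen n k := by
      have := asc_succ (n := n) (i := q) (j := k - 1) (by omega)
      rwa [show k - 1 + 1 = k by omega] at this
    have eD : desc n k q = gen n k * desc n (k - 1) q := by
      have := desc_succ (n := n) (j := k - 1) (i := q) (by omega)
      rwa [show k - 1 + 1 = k by omega] at this
    have h1 : ell n i k ^ 2 = desc n k i * asc n i k * ell n i (k - 1) ^ 2 :=
      MBAND hi (by omega) hkn
    have h2 : ell n i (k - 1) ^ 2 =
        desc n (k - 1) i * asc n i (k - 1) * ell n i (k - 2) ^ 2 := by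
      have := MBAND (n := n) (x := i) (y := k - 1) hi (by omega) (by omega)
      rwa [show k - 1 - 1 = k - 2 by omega] at this
    have eDk : desc n k i = gen n k * desc n (k - 1) i := by
      have := desc_succ (n := n) (j := k - 1) (i := i) (by omega)
      rwa [show k - 1 + 1 = k by omega] at this
    have eAk : asc n i k = asc n i (k - 1) * gen n k := by
      have := asc_succ (n := n) (i := i) (j := k - 1) (by omega)
      rwa [show k - 1 + 1 = k by omega] at this
    have fT1 : Commute (gen n k) (ell n i (k - 2) ^ 2) := comm_gen_sq_far (Or.inl (by omega))
    have fT2 : Commute (gen n k) ((ell n i (q - 2) ^ 2)⁻¹) :=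
      (comm_gen_sq_far (Or.inl (by omega))).inv_right
    have hDA : desc n k i * asc n i k = ell n i k ^ 2 * (ell n i (k - 1) ^ 2)⁻¹ := by
      rw [h1]; group
    have cA1 : Commute (ell n i k ^ 2) (asc n q (k - 1)) :=
      sq_ell_comm_asc hi hkn (by omega) (by omega)
    have cA2 : Commute ((ell n i (k - 1) ^ 2)⁻¹) (asc n q (k - 1)) :=
      (sq_ell_comm_asc hi (by omega) (by omega) (le_refl (k - 1))).inv_left
    have hIH : asc n q (k - 1) * ell n i (k - 2) ^ 2 * (ell n i (q - 2) ^ 2)⁻¹ *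
        desc n (k - 1) q = ell n i (k - 1) ^ 2 * (ell n i (q - 1) ^ 2)⁻¹ := by
      have := ih (i := i) (q := q) (k := k - 1) (by omega) hi hiq (by omega)
      rwa [show k - 1 - 1 = k - 2 by omega] at this
    calc asc n q k * ell n i (k - 1) ^ 2 * (ell n i (q - 2) ^ 2)⁻¹ * desc n k q
        = asc n q (k - 1) * (gen n k * (desc n (k - 1) i * asc n i (k - 1))) *
            (ell n i (k - 2) ^ 2 * ((ell n i (q - 2) ^ 2)⁻¹ * gen n k)) * desc n (k - 1) q := by
          rw [eA, eD, h2]; group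
      _ = asc n q (k - 1) * (gen n k * (desc n (k - 1) i * asc n i (k - 1))) *
            (ell n i (k - 2) ^ 2 * (gen n k * (ell n i (q - 2) ^ 2)⁻¹)) * desc n (k - 1) q := by
          rw [← fT2.eq]
      _ = asc n q (k - 1) * (gen n k * (desc n (k - 1) i * asc n i (k - 1))) *
            ((ell n i (k - 2) ^ 2 * gen n k) * (ell n i (q - 2) ^ 2)⁻¹) * desc n (k - 1) q := by
          group
      _ = asc n q (k - 1) * (gen n k * (desc n (k - 1) i * asc n i (k - 1))) *
            ((gen n k * ell n i (k - 2) ^ 2) * (ell n i (q - 2) ^ 2)⁻¹) * desc n (k - 1) q := by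
          rw [← fT1.eq]
      _ = asc n q (k - 1) * ((gen n k * desc n (k - 1) i) * (asc n i (k - 1) * gen n k)) *
            (ell n i (k - 2) ^ 2 * (ell n i (q - 2) ^ 2)⁻¹) * desc n (k - 1) q := by
          group
      _ = asc n q (k - 1) * (ell n i k ^ 2 * (ell n i (k - 1) ^ 2)⁻¹) *
            (ell n i (k - 2) ^ 2 * (ell n i (q - 2) ^ 2)⁻¹) * desc n (k - 1) q := by
          rw [← eDk, ← eAk, hDA]
      _ = ell n i k ^ 2 * ((ell n i (k - 1) ^ 2)⁻¹ * (asc n q (k - 1) *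
            (ell n i (k - 2) ^ 2 * (ell n i (q - 2) ^ 2)⁻¹) * desc n (k - 1) q)) := by
          rw [show asc n q (k - 1) * (ell n i k ^ 2 * (ell n i (k - 1) ^ 2)⁻¹) =
            ell n i k ^ 2 * (ell n i (k - 1) ^ 2)⁻¹ * asc n q (k - 1) from by
              rw [← mul_assoc, ← cA1.eq, mul_assoc, ← cA2.eq, mul_assoc]]
          group
      _ = ell n i k ^ 2 * ((ell n i (k - 1) ^ 2)⁻¹ *
            (ell n i (k - 1) ^ 2 * (ell n i (q - 1) ^ 2)⁻¹)) := by
          rw [show asc n q (k - 1) * (ell n i (k - 2) ^ 2 * (ell n i (q - 2) ^ 2)⁻¹) *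
            desc n (k - 1) q = ell n i (k - 1) ^ 2 * (ell n i (q - 1) ^ 2)⁻¹ from by
              rw [← hIH]; group]
      _ = ell n i k ^ 2 * (ell n i (q - 1) ^ 2)⁻¹ := by group
lemma BAND' {x y : ℕ} (hx : 1 ≤ x) (hxy : x ≤ y + 1) (hyn : y ≤ n) :
    ell n x y ^ 2 = asc n x y * desc n y x * ell n (x + 1) y ^ 2 := by
  by_cases h : x ≤ y
  · exact BAND hx h hyn
  · rw [ell_empty (i := x) (j := y) (by omega), ell_empty (i := x + 1) (j := y) (by omega),
      asc_empty (by omega), desc_empty (by omega)]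
    simp

/-- Bubbling helper. -/
lemma swap_head {G : Type*} [Group G] {a b : G} (h : Commute a b) (x : G) :
    a * (b * x) = b * (a * x) := by
  rw [← mul_assoc, h.eq, mul_assoc]

/-- Cancellation helper. -/
lemma cancel_mid {G : Type*} [Group G] {u p q x : G} (h1 : Commute u p) (h2 : Commute u q) :
    u * (p * (q * u⁻¹ * (x : G))) = p * (q * x) := by
  rw [← mul_assoc, h1.eq, mul_assoc]
  congr 1
  rw [← mul_assoc, ← mul_assoc, h2.eq]
  group

/-! ### The overlap lemma -/

set_option maxHeartbeats 1000000 in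
lemma OVL : ∀ (t : ℕ) {i a j k : ℕ}, k = j + t → 1 ≤ i → i < a → a ≤ j + 1 → k ≤ n →
    ell n a k * ell n i j ^ 2 * ell n a k =
      ell n i k ^ 2 * ell n (a + k - j) k ^ 2 * (ell n i (a + k - j - 2) ^ 2)⁻¹ *
        ell n i (a - 2) ^ 2 * ell n a (a + k - j - 2) ^ 2 := by
  intro t
  induction t with
  | zero =>
    intro i a j k hk hi hia haj hkn
    have hjk : j = k := by omega
    subst hjk
    rw [show a + j - j = a by omega, ell_empty (i := a) (j := a - 2) (by omega)]
    have hc : Commute (ell n a j) (ell n i j ^ 2) :=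
      (sq_ell_comm_ell hi hkn (by omega) le_rfl).symm
    calc ell n a j * ell n i j ^ 2 * ell n a j
        = ell n i j ^ 2 * (ell n a j * ell n a j) := by rw [hc.eq]; group
      _ = ell n i j ^ 2 * ell n a j ^ 2 * (ell n i (a - 2) ^ 2)⁻¹ *
            ell n i (a - 2) ^ 2 * 1 := by
          rw [show ell n a j * ell n a j = ell n a j ^ 2 from (pow_two _).symm]; group
  | succ t ih =>
    intro i a j k hk hi hia haj hkn
    have hjk : j + 1 ≤ k := by omega
    have ha1 : 1 ≤ a := by omega
    have e1 : ell n a k = asc n a k * ell n a (k - 1) := ell_key ha1 (by omega) hkn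
    have e2 : ell n a k = ell n a (k - 1) * desc n k a := by
      have := ell_succ (n := n) (i := a) (j := k - 1) (by omega)
      rwa [show k - 1 + 1 = k by omega] at this
    have hIH : ell n a (k - 1) * ell n i j ^ 2 * ell n a (k - 1) =
        ell n i (k - 1) ^ 2 * ell n (a + k - j - 1) (k - 1) ^ 2 *
          (ell n i (a + k - j - 3) ^ 2)⁻¹ * ell n i (a - 2) ^ 2 *
          ell n a (a + k - j - 3) ^ 2 := by
      have := ih (i := i) (a := a) (j := j) (k := k - 1) (by omega) hi hia haj (by omega)
      rwa [show a + (k - 1) - j = a + k - j - 1 by omega,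
        show a + k - j - 1 - 2 = a + k - j - 3 by omega] at this
    have c12 : Commute (ell n i (k - 1) ^ 2) (ell n (a + k - j - 1) (k - 1) ^ 2) :=
      comm_sq_sq_nested hi (by omega) (by omega) le_rfl
    have c45 : Commute (ell n i (a - 2) ^ 2) (ell n a (a + k - j - 3) ^ 2) :=
      comm_sq_sq_far (by omega)
    have c13 : Commute (ell n i (k - 1) ^ 2) ((ell n i (a + k - j - 3) ^ 2)⁻¹) :=
      (comm_sq_sq_nested hi (by omega) le_rfl (by omega)).inv_right
    have c24 : Commute (ell n (a + k - j - 1) (k - 1) ^ 2) (ell n i (a - 2) ^ 2) :=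
      (comm_sq_sq_far (by omega)).symm
    have c25 : Commute (ell n (a + k - j - 1) (k - 1) ^ 2) (ell n a (a + k - j - 3) ^ 2) :=
      (comm_sq_sq_far (by omega)).symm
    have c14 : Commute (ell n i (k - 1) ^ 2) (ell n i (a - 2) ^ 2) :=
      comm_sq_sq_nested hi (by omega) le_rfl (by omega)
    have c15 : Commute (ell n i (k - 1) ^ 2) (ell n a (a + k - j - 3) ^ 2) :=
      comm_sq_sq_nested hi (by omega) (by omega) (by omega)
    have c34 : Commute ((ell n i (a + k - j - 3) ^ 2)⁻¹) (ell n i (a - 2) ^ 2) :=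
      (comm_sq_sq_nested hi (by omega) le_rfl (by omega)).inv_left
    have c35 : Commute ((ell n i (a + k - j - 3) ^ 2)⁻¹) (ell n a (a + k - j - 3) ^ 2) :=
      (comm_sq_sq_nested hi (by omega) (by omega) le_rfl).inv_left
    have s1 : asc n a k * ell n (a + k - j - 1) (k - 1) ^ 2 =
        ell n (a + k - j) k ^ 2 * asc n a k := by
      have := asc_ell_sq (n := n) (a := a) (k := k) (x := a + k - j - 1) (y := k - 1)
        ha1 hkn (by omega) (by omega) (by omega)
      rwa [show a + k - j - 1 + 1 = a + k - j by omega, show k - 1 + 1 = k by omega] at this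
    have s2 : asc n a k * ell n a (a + k - j - 3) ^ 2 =
        ell n (a + 1) (a + k - j - 2) ^ 2 * asc n a k := by
      have := asc_ell_sq (n := n) (a := a) (k := k) (x := a) (y := a + k - j - 3)
        ha1 hkn le_rfl (by omega) (by omega)
      rwa [show a + k - j - 3 + 1 = a + k - j - 2 by omega] at this
    have s3 : Commute (asc n a k) (ell n i (a - 2) ^ 2) := by
      refine (commute_asc fun s hs1 hs2 => ?_).symm
      exact (comm_gen_sq_far (m := s) (x := i) (y := a - 2) (Or.inl (by omega))).symm
    have eA2 : asc n a k = asc n a (a + k - j - 2) * asc n (a + k - j - 1) k := by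
      have := asc_split (n := n) (a := a) (q := a + k - j - 1) (k := k)
        (by omega) (by omega) (by omega)
      rwa [show a + k - j - 1 - 1 = a + k - j - 2 by omega] at this
    have eD2 : desc n k a = desc n k (a + k - j - 1) * desc n (a + k - j - 2) a := by
      have := desc_split (n := n) (k := k) (q := a + k - j - 1) (a := a)
        (by omega) (by omega) (by omega)
      rwa [show a + k - j - 1 - 1 = a + k - j - 2 by omega] at this
    have hL : asc n (a + k - j - 1) k * ell n i (k - 1) ^ 2 *
        (ell n i (a + k - j - 3) ^ 2)⁻¹ * desc n k (a + k - j - 1) =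
        ell n i k ^ 2 * (ell n i (a + k - j - 2) ^ 2)⁻¹ := by
      have := LADD (k - (a + k - j - 1)) (i := i) (q := a + k - j - 1) (k := k)
        (by omega) hi (by omega) hkn
      rwa [show a + k - j - 1 - 2 = a + k - j - 3 by omega,
        show a + k - j - 1 - 1 = a + k - j - 2 by omega] at this
    have cdk : Commute (ell n i k ^ 2) (desc n (a + k - j - 2) a) :=
      sq_ell_comm_desc hi hkn (by omega) (by omega)
    have cdm : Commute ((ell n i (a + k - j - 2) ^ 2)⁻¹) (desc n (a + k - j - 2) a) :=
      (sq_ell_comm_desc hi (by omega) (by omega) le_rfl).inv_left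
    have hB : asc n a (a + k - j - 2) * desc n (a + k - j - 2) a =
        ell n a (a + k - j - 2) ^ 2 * (ell n (a + 1) (a + k - j - 2) ^ 2)⁻¹ := by
      have := BAND' (n := n) (x := a) (y := a + k - j - 2) ha1 (by omega) (by omega)
      rw [this]; group
    have f1 : Commute (ell n (a + 1) (a + k - j - 2) ^ 2) (ell n i (a - 2) ^ 2) :=
      (comm_sq_sq_far (u := a + 1) (by omega)).symm
    have f2 : Commute (ell n (a + 1) (a + k - j - 2) ^ 2) (ell n a (a + k - j - 2) ^ 2) := by
      by_cases hne : a + 1 ≤ a + k - j - 2 + 1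
      · exact (comm_sq_sq_nested ha1 (by omega) (by omega) le_rfl).symm
      · rw [ell_empty (i := a + 1) (j := a + k - j - 2) (by omega)]
        simp [Commute.one_left]
    have g1 : Commute (ell n i k ^ 2) (ell n (a + k - j) k ^ 2) :=
      comm_sq_sq_nested hi hkn (by omega) le_rfl
    have g2 : Commute (ell n i k ^ 2) (ell n i (a - 2) ^ 2) :=
      comm_sq_sq_nested hi hkn le_rfl (by omega)
    have g3 : Commute (ell n i k ^ 2) (ell n a (a + k - j - 2) ^ 2) :=
      comm_sq_sq_nested hi hkn (by omega) (by omega)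
    have g4 : Commute ((ell n i (a + k - j - 2) ^ 2)⁻¹) (ell n i (a - 2) ^ 2) :=
      (comm_sq_sq_nested hi (by omega) le_rfl (by omega)).inv_left
    have g5 : Commute ((ell n i (a + k - j - 2) ^ 2)⁻¹) (ell n a (a + k - j - 2) ^ 2) :=
      (comm_sq_sq_nested hi (by omega) (by omega) le_rfl).inv_left
    have g6 : Commute (ell n (a + k - j) k ^ 2) ((ell n i (a + k - j - 2) ^ 2)⁻¹) :=
      (comm_sq_sq_far (by omega)).symm.inv_right
    have g7 : Commute (ell n (a + k - j) k ^ 2) (ell n i (a - 2) ^ 2) :=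
      (comm_sq_sq_far (by omega)).symm
    calc ell n a k * ell n i j ^ 2 * ell n a k
        = asc n a k * (ell n a (k - 1) * ell n i j ^ 2 * ell n a (k - 1)) * desc n k a := by
          nth_rewrite 1 [e1]
          nth_rewrite 1 [e2]
          group
      _ = asc n a k * (ell n i (k - 1) ^ 2 * ell n (a + k - j - 1) (k - 1) ^ 2 *
            (ell n i (a + k - j - 3) ^ 2)⁻¹ * ell n i (a - 2) ^ 2 *
            ell n a (a + k - j - 3) ^ 2) * desc n k a := by rw [hIH]
      _ = asc n a k * (ell n (a + k - j - 1) (k - 1) ^ 2 * (ell n a (a + k - j - 3) ^ 2 *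
            (ell n i (a - 2) ^ 2 * (ell n i (k - 1) ^ 2 *
            (ell n i (a + k - j - 3) ^ 2)⁻¹)))) * desc n k a := by
          congr 2
          calc ell n i (k - 1) ^ 2 * ell n (a + k - j - 1) (k - 1) ^ 2 *
              (ell n i (a + k - j - 3) ^ 2)⁻¹ * ell n i (a - 2) ^ 2 *
              ell n a (a + k - j - 3) ^ 2
              = ell n i (k - 1) ^ 2 * (ell n (a + k - j - 1) (k - 1) ^ 2 *
                ((ell n i (a + k - j - 3) ^ 2)⁻¹ * (ell n i (a - 2) ^ 2 *
                ell n a (a + k - j - 3) ^ 2))) := by group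
            _ = ell n (a + k - j - 1) (k - 1) ^ 2 * (ell n i (k - 1) ^ 2 *
                ((ell n i (a + k - j - 3) ^ 2)⁻¹ * (ell n i (a - 2) ^ 2 *
                ell n a (a + k - j - 3) ^ 2))) := swap_head c12 _
            _ = ell n (a + k - j - 1) (k - 1) ^ 2 * (ell n i (k - 1) ^ 2 *
                ((ell n i (a + k - j - 3) ^ 2)⁻¹ * (ell n a (a + k - j - 3) ^ 2 *
                ell n i (a - 2) ^ 2))) := by rw [(c45 : Commute (ell n i (a - 2) ^ 2)
                  (ell n a (a + k - j - 3) ^ 2)).eq]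
            _ = ell n (a + k - j - 1) (k - 1) ^ 2 * (ell n i (k - 1) ^ 2 *
                (ell n a (a + k - j - 3) ^ 2 * ((ell n i (a + k - j - 3) ^ 2)⁻¹ *
                ell n i (a - 2) ^ 2))) := by rw [swap_head c35 _]
            _ = ell n (a + k - j - 1) (k - 1) ^ 2 * (ell n a (a + k - j - 3) ^ 2 *
                (ell n i (k - 1) ^ 2 * ((ell n i (a + k - j - 3) ^ 2)⁻¹ *
                ell n i (a - 2) ^ 2))) := by rw [swap_head c15 _]
            _ = ell n (a + k - j - 1) (k - 1) ^ 2 * (ell n a (a + k - j - 3) ^ 2 *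
                (ell n i (a - 2) ^ 2 * (ell n i (k - 1) ^ 2 *
                (ell n i (a + k - j - 3) ^ 2)⁻¹))) := by
                  congr 2
                  calc ell n i (k - 1) ^ 2 * ((ell n i (a + k - j - 3) ^ 2)⁻¹ *
                      ell n i (a - 2) ^ 2)
                      = ell n i (k - 1) ^ 2 * (ell n i (a - 2) ^ 2 *
                        (ell n i (a + k - j - 3) ^ 2)⁻¹) := by rw [c34.eq]
                    _ = ell n i (a - 2) ^ 2 * (ell n i (k - 1) ^ 2 *
                        (ell n i (a + k - j - 3) ^ 2)⁻¹) := swap_head c14 _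
      _ = ell n (a + k - j) k ^ 2 * (ell n (a + 1) (a + k - j - 2) ^ 2 *
            (ell n i (a - 2) ^ 2 * (asc n a k * (ell n i (k - 1) ^ 2 *
            (ell n i (a + k - j - 3) ^ 2)⁻¹)))) * desc n k a := by
          congr 1
          calc asc n a k * (ell n (a + k - j - 1) (k - 1) ^ 2 * (ell n a (a + k - j - 3) ^ 2 *
              (ell n i (a - 2) ^ 2 * (ell n i (k - 1) ^ 2 *
              (ell n i (a + k - j - 3) ^ 2)⁻¹))))
              = (asc n a k * ell n (a + k - j - 1) (k - 1) ^ 2) * (ell n a (a + k - j - 3) ^ 2 *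
                (ell n i (a - 2) ^ 2 * (ell n i (k - 1) ^ 2 *
                (ell n i (a + k - j - 3) ^ 2)⁻¹))) := by group
            _ = ell n (a + k - j) k ^ 2 * (asc n a k * (ell n a (a + k - j - 3) ^ 2 *
                (ell n i (a - 2) ^ 2 * (ell n i (k - 1) ^ 2 *
                (ell n i (a + k - j - 3) ^ 2)⁻¹)))) := by rw [s1]; group
            _ = ell n (a + k - j) k ^ 2 * ((asc n a k * ell n a (a + k - j - 3) ^ 2) *
                (ell n i (a - 2) ^ 2 * (ell n i (k - 1) ^ 2 *
                (ell n i (a + k - j - 3) ^ 2)⁻¹))) := by group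
            _ = ell n (a + k - j) k ^ 2 * (ell n (a + 1) (a + k - j - 2) ^ 2 *
                (asc n a k * (ell n i (a - 2) ^ 2 * (ell n i (k - 1) ^ 2 *
                (ell n i (a + k - j - 3) ^ 2)⁻¹)))) := by rw [s2]; group
            _ = ell n (a + k - j) k ^ 2 * (ell n (a + 1) (a + k - j - 2) ^ 2 *
                (ell n i (a - 2) ^ 2 * (asc n a k * (ell n i (k - 1) ^ 2 *
                (ell n i (a + k - j - 3) ^ 2)⁻¹)))) := by rw [swap_head s3 _]
      _ = ell n (a + k - j) k ^ 2 * (ell n (a + 1) (a + k - j - 2) ^ 2 *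
            (ell n i (a - 2) ^ 2 * (asc n a (a + k - j - 2) *
            (asc n (a + k - j - 1) k * ell n i (k - 1) ^ 2 *
            (ell n i (a + k - j - 3) ^ 2)⁻¹ * desc n k (a + k - j - 1)) *
            (desc n (a + k - j - 2) a)))) := by
          nth_rewrite 1 [eA2]
          nth_rewrite 1 [eD2]
          group
      _ = ell n (a + k - j) k ^ 2 * (ell n (a + 1) (a + k - j - 2) ^ 2 *
            (ell n i (a - 2) ^ 2 * (asc n a (a + k - j - 2) *
            (ell n i k ^ 2 * (ell n i (a + k - j - 2) ^ 2)⁻¹) *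
            (desc n (a + k - j - 2) a)))) := by rw [hL]
      _ = ell n (a + k - j) k ^ 2 * (ell n (a + 1) (a + k - j - 2) ^ 2 *
            (ell n i (a - 2) ^ 2 * ((asc n a (a + k - j - 2) * desc n (a + k - j - 2) a) *
            (ell n i k ^ 2 * (ell n i (a + k - j - 2) ^ 2)⁻¹)))) := by
          rw [show asc n a (a + k - j - 2) * (ell n i k ^ 2 *
            (ell n i (a + k - j - 2) ^ 2)⁻¹) * desc n (a + k - j - 2) a =
            asc n a (a + k - j - 2) * desc n (a + k - j - 2) a *
            (ell n i k ^ 2 * (ell n i (a + k - j - 2) ^ 2)⁻¹) from by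
              rw [mul_assoc, (Commute.mul_left cdk cdm).eq]; group]
      _ = ell n (a + k - j) k ^ 2 * (ell n (a + 1) (a + k - j - 2) ^ 2 *
            (ell n i (a - 2) ^ 2 * (ell n a (a + k - j - 2) ^ 2 *
            (ell n (a + 1) (a + k - j - 2) ^ 2)⁻¹ *
            (ell n i k ^ 2 * (ell n i (a + k - j - 2) ^ 2)⁻¹)))) := by rw [hB]
      _ = ell n (a + k - j) k ^ 2 * (ell n i (a - 2) ^ 2 * (ell n a (a + k - j - 2) ^ 2 *
            (ell n i k ^ 2 * (ell n i (a + k - j - 2) ^ 2)⁻¹))) := by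
          exact congrArg (ell n (a + k - j) k ^ 2 * ·) (cancel_mid f1 f2)
      _ = ell n i k ^ 2 * ell n (a + k - j) k ^ 2 * (ell n i (a + k - j - 2) ^ 2)⁻¹ *
            ell n i (a - 2) ^ 2 * ell n a (a + k - j - 2) ^ 2 := by
          calc ell n (a + k - j) k ^ 2 * (ell n i (a - 2) ^ 2 * (ell n a (a + k - j - 2) ^ 2 *
              (ell n i k ^ 2 * (ell n i (a + k - j - 2) ^ 2)⁻¹)))
              = ell n (a + k - j) k ^ 2 * (ell n i (a - 2) ^ 2 * (ell n i k ^ 2 *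
                (ell n a (a + k - j - 2) ^ 2 * (ell n i (a + k - j - 2) ^ 2)⁻¹))) := by
                  rw [swap_head g3.symm _]
            _ = ell n (a + k - j) k ^ 2 * (ell n i k ^ 2 * (ell n i (a - 2) ^ 2 *
                (ell n a (a + k - j - 2) ^ 2 * (ell n i (a + k - j - 2) ^ 2)⁻¹))) := by
                  rw [swap_head g2.symm _]
            _ = ell n i k ^ 2 * (ell n (a + k - j) k ^ 2 * (ell n i (a - 2) ^ 2 *
                (ell n a (a + k - j - 2) ^ 2 * (ell n i (a + k - j - 2) ^ 2)⁻¹))) := by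
                  rw [swap_head g1.symm _]
            _ = ell n i k ^ 2 * (ell n (a + k - j) k ^ 2 * (ell n i (a - 2) ^ 2 *
                ((ell n i (a + k - j - 2) ^ 2)⁻¹ * ell n a (a + k - j - 2) ^ 2))) := by
                  rw [← g5.eq]
            _ = ell n i k ^ 2 * (ell n (a + k - j) k ^ 2 * ((ell n i (a + k - j - 2) ^ 2)⁻¹ *
                (ell n i (a - 2) ^ 2 * ell n a (a + k - j - 2) ^ 2))) := by
                  rw [swap_head g4.symm _]
            _ = ell n i k ^ 2 * ell n (a + k - j) k ^ 2 * (ell n i (a + k - j - 2) ^ 2)⁻¹ *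
                ell n i (a - 2) ^ 2 * ell n a (a + k - j - 2) ^ 2 := by group
/-! ### The mirrored overlap lemma -/

lemma phiL (u v : ℕ) (hu : 1 ≤ u) (hv : v ≤ n) :
    phi (ell n u v) = ell n (n + 1 - v) (n + 1 - u) := phi_ell hu hv

lemma OVR {a j k p : ℕ} (ha : 1 ≤ a) (haj : a ≤ j + 1) (hjk : j + 1 ≤ k) (hkp : k < p)
    (hpn : p ≤ n) :
    ell n a k * ell n (j + 2) p ^ 2 * ell n a k =
      ell n a p ^ 2 * ell n a (a + k - j - 2) ^ 2 * (ell n (a + k - j) p ^ 2)⁻¹ *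
        ell n (a + k - j) k ^ 2 * ell n (k + 2) p ^ 2 := by
  have hO := OVL (n := n) (j + 2 - a) (i := n + 1 - p) (a := n + 1 - k)
    (j := n - 1 - j) (k := n + 1 - a) (by omega) (by omega) (by omega) (by omega) (by omega)
  have h2 := congrArg phi hO
  simp only [map_mul, map_inv, map_pow] at h2
  rw [phiL _ _ (by omega) (by omega), phiL _ _ (by omega) (by omega),
      phiL _ _ (by omega) (by omega), phiL _ _ (by omega) (by omega),
      phiL _ _ (by omega) (by omega), phiL _ _ (by omega) (by omega),
      phiL _ _ (by omega) (by omega)] at h2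
  rw [show n + 1 - (n + 1 - a) = a by omega, show n + 1 - (n + 1 - k) = k by omega,
      show n + 1 - (n - 1 - j) = j + 2 by omega,
      show n + 1 - (n + 1 - p) = p by omega,
      show n + 1 - (n + 1 - k + (n + 1 - a) - (n - 1 - j)) = a + k - j - 2 by omega,
      show n + 1 - (n + 1 - k + (n + 1 - a) - (n - 1 - j) - 2) = a + k - j by omega,
      show n + 1 - (n + 1 - k - 2) = k + 2 by omega] at h2
  rw [h2]
  have hcomm : Commute (ell n (k + 2) p ^ 2) (ell n (a + k - j) k ^ 2) :=
    (comm_sq_sq_far (by omega)).symm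
  rw [mul_assoc, hcomm.eq, ← mul_assoc]

/-! ### Conjugating the c and d elements by ℓ_{a,k} -/

lemma C1m {i a j k : ℕ} (hi : 1 ≤ i) (hia : i < a) (haj : a ≤ j + 1) (hjk : j + 1 ≤ k)
    (hkn : k ≤ n) :
    ell n a k * ((ell n a k ^ 2)⁻¹ * ell n a j ^ 2 * ell n i k ^ 2 * (ell n i j ^ 2)⁻¹) =
      ell n i (a + k - j - 2) ^ 2 * (ell n i (a - 2) ^ 2)⁻¹ *
        (ell n a (a + k - j - 2) ^ 2)⁻¹ * ell n a k := by
  have hOVL := OVL (k - j) (i := i) (a := a) (j := j) (k := k) (by omega) hi hia haj hkn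
  have flip1 : ell n a k * ell n a j ^ 2 = ell n (a + k - j) k ^ 2 * ell n a k := by
    have := ell_flip_sq (n := n) (x := a) (z := k) (u := a) (v := j) (by omega) hkn le_rfl
      (by omega) (by omega)
    rwa [show a + k - a = k by omega] at this
  have cik : Commute (ell n a k) (ell n i k ^ 2) :=
    (sq_ell_comm_ell hi hkn (by omega) le_rfl).symm
  have c2mk : Commute (ell n a k ^ 2) (ell n (a + k - j) k ^ 2) := by
    by_cases hmk : a + k - j ≤ k
    · exact comm_sq_sq_nested (by omega) hkn (by omega) le_rfl
    · rw [ell_empty (i := a + k - j) (j := k) (by omega)]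
      simp
  have hTaj : ell n a j ^ 2 = (ell n a k)⁻¹ * (ell n (a + k - j) k ^ 2 * ell n a k) := by
    rw [← flip1]; group
  have conj1 : (ell n a k)⁻¹ * ell n a j ^ 2 * ell n a k = ell n (a + k - j) k ^ 2 := by
    calc (ell n a k)⁻¹ * ell n a j ^ 2 * ell n a k
        = (ell n a k ^ 2)⁻¹ * (ell n (a + k - j) k ^ 2 * ell n a k ^ 2) := by
          rw [hTaj]; simp only [pow_two]; group
      _ = ell n (a + k - j) k ^ 2 := by rw [← c2mk.eq, inv_mul_cancel_left]
  -- abbreviations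
  have hinv : (ell n i j ^ 2)⁻¹ * ell n a k = ell n a k *
      ((ell n i k ^ 2 * ell n (a + k - j) k ^ 2 * (ell n i (a + k - j - 2) ^ 2)⁻¹ *
        ell n i (a - 2) ^ 2 * ell n a (a + k - j - 2) ^ 2)⁻¹ * ell n a k ^ 2) := by
    have h' : ell n i j ^ 2 = (ell n a k)⁻¹ *
        ((ell n i k ^ 2 * ell n (a + k - j) k ^ 2 * (ell n i (a + k - j - 2) ^ 2)⁻¹ *
         ell n i (a - 2) ^ 2 * ell n a (a + k - j - 2) ^ 2) * (ell n a k)⁻¹) := by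
      rw [← hOVL]; group
    rw [h']; simp only [pow_two]; group
  -- commutes among the five twists of M
  have xAB : Commute (ell n i k ^ 2) (ell n (a + k - j) k ^ 2) :=
    comm_sq_sq_nested hi hkn (by omega) le_rfl
  have xAC : Commute (ell n i k ^ 2) (ell n i (a + k - j - 2) ^ 2) :=
    comm_sq_sq_nested hi hkn le_rfl (by omega)
  have xAD : Commute (ell n i k ^ 2) (ell n i (a - 2) ^ 2) :=
    comm_sq_sq_nested hi hkn le_rfl (by omega)
  have xAE : Commute (ell n i k ^ 2) (ell n a (a + k - j - 2) ^ 2) :=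
    comm_sq_sq_nested hi hkn (by omega) (by omega)
  have xBC : Commute (ell n (a + k - j) k ^ 2) (ell n i (a + k - j - 2) ^ 2) :=
    (comm_sq_sq_far (by omega)).symm
  have xBD : Commute (ell n (a + k - j) k ^ 2) (ell n i (a - 2) ^ 2) :=
    (comm_sq_sq_far (by omega)).symm
  have xBE : Commute (ell n (a + k - j) k ^ 2) (ell n a (a + k - j - 2) ^ 2) :=
    (comm_sq_sq_far (by omega)).symm
  have xCD : Commute (ell n i (a + k - j - 2) ^ 2) (ell n i (a - 2) ^ 2) :=
    comm_sq_sq_nested hi (by omega) le_rfl (by omega)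
  have xCE : Commute (ell n i (a + k - j - 2) ^ 2) (ell n a (a + k - j - 2) ^ 2) :=
    comm_sq_sq_nested hi (by omega) (by omega) le_rfl
  have xDE : Commute (ell n i (a - 2) ^ 2) (ell n a (a + k - j - 2) ^ 2) :=
    comm_sq_sq_far (by omega)
  -- the multitwist identity
  have hMT : ell n (a + k - j) k ^ 2 * ell n i k ^ 2 *
      (ell n i k ^ 2 * ell n (a + k - j) k ^ 2 * (ell n i (a + k - j - 2) ^ 2)⁻¹ *
        ell n i (a - 2) ^ 2 * ell n a (a + k - j - 2) ^ 2)⁻¹ =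
      ell n i (a + k - j - 2) ^ 2 * (ell n i (a - 2) ^ 2)⁻¹ *
        (ell n a (a + k - j - 2) ^ 2)⁻¹ := by
    rw [show (ell n i k ^ 2 * ell n (a + k - j) k ^ 2 * (ell n i (a + k - j - 2) ^ 2)⁻¹ *
      ell n i (a - 2) ^ 2 * ell n a (a + k - j - 2) ^ 2)⁻¹ =
      (ell n a (a + k - j - 2) ^ 2)⁻¹ * ((ell n i (a - 2) ^ 2)⁻¹ *
      (ell n i (a + k - j - 2) ^ 2 * ((ell n (a + k - j) k ^ 2)⁻¹ *
      (ell n i k ^ 2)⁻¹))) from by group]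
    calc ell n (a + k - j) k ^ 2 * ell n i k ^ 2 *
        ((ell n a (a + k - j - 2) ^ 2)⁻¹ * ((ell n i (a - 2) ^ 2)⁻¹ *
        (ell n i (a + k - j - 2) ^ 2 * ((ell n (a + k - j) k ^ 2)⁻¹ *
        (ell n i k ^ 2)⁻¹))))
        = ell n (a + k - j) k ^ 2 * ell n i k ^ 2 *
          ((ell n a (a + k - j - 2) ^ 2)⁻¹ * ((ell n i (a - 2) ^ 2)⁻¹ *
          (ell n i (a + k - j - 2) ^ 2 * ((ell n i k ^ 2)⁻¹ *
          (ell n (a + k - j) k ^ 2)⁻¹)))) := by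
            rw [show (ell n (a + k - j) k ^ 2)⁻¹ * (ell n i k ^ 2)⁻¹ =
              (ell n i k ^ 2)⁻¹ * (ell n (a + k - j) k ^ 2)⁻¹ from
              (xAB.inv_left.inv_right.symm).eq]
      _ = ell n (a + k - j) k ^ 2 * ell n i k ^ 2 *
          ((ell n a (a + k - j - 2) ^ 2)⁻¹ * ((ell n i (a - 2) ^ 2)⁻¹ *
          ((ell n i k ^ 2)⁻¹ * (ell n i (a + k - j - 2) ^ 2 *
          (ell n (a + k - j) k ^ 2)⁻¹)))) := by
            rw [swap_head xAC.inv_left.symm _]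
      _ = ell n (a + k - j) k ^ 2 * ell n i k ^ 2 *
          ((ell n a (a + k - j - 2) ^ 2)⁻¹ * ((ell n i k ^ 2)⁻¹ *
          ((ell n i (a - 2) ^ 2)⁻¹ * (ell n i (a + k - j - 2) ^ 2 *
          (ell n (a + k - j) k ^ 2)⁻¹)))) := by
            rw [swap_head (xAD.inv_left.inv_right.symm) _]
      _ = ell n (a + k - j) k ^ 2 * ell n i k ^ 2 *
          ((ell n i k ^ 2)⁻¹ * ((ell n a (a + k - j - 2) ^ 2)⁻¹ *
          ((ell n i (a - 2) ^ 2)⁻¹ * (ell n i (a + k - j - 2) ^ 2 *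
          (ell n (a + k - j) k ^ 2)⁻¹)))) := by
            rw [swap_head (xAE.inv_left.inv_right.symm) _]
      _ = ell n (a + k - j) k ^ 2 * ((ell n a (a + k - j - 2) ^ 2)⁻¹ *
          ((ell n i (a - 2) ^ 2)⁻¹ * (ell n i (a + k - j - 2) ^ 2 *
          (ell n (a + k - j) k ^ 2)⁻¹))) := by
            rw [show ell n (a + k - j) k ^ 2 * ell n i k ^ 2 * ((ell n i k ^ 2)⁻¹ *
              ((ell n a (a + k - j - 2) ^ 2)⁻¹ * ((ell n i (a - 2) ^ 2)⁻¹ *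
              (ell n i (a + k - j - 2) ^ 2 * (ell n (a + k - j) k ^ 2)⁻¹)))) =
              ell n (a + k - j) k ^ 2 * ((ell n a (a + k - j - 2) ^ 2)⁻¹ *
              ((ell n i (a - 2) ^ 2)⁻¹ * (ell n i (a + k - j - 2) ^ 2 *
              (ell n (a + k - j) k ^ 2)⁻¹))) from by group]
      _ = ell n (a + k - j) k ^ 2 * ((ell n a (a + k - j - 2) ^ 2)⁻¹ *
          ((ell n i (a - 2) ^ 2)⁻¹ * ((ell n (a + k - j) k ^ 2)⁻¹ *
          ell n i (a + k - j - 2) ^ 2))) := by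
            rw [show ell n i (a + k - j - 2) ^ 2 * (ell n (a + k - j) k ^ 2)⁻¹ =
              (ell n (a + k - j) k ^ 2)⁻¹ * ell n i (a + k - j - 2) ^ 2 from
              (xBC.inv_left.symm).eq]
      _ = ell n (a + k - j) k ^ 2 * ((ell n a (a + k - j - 2) ^ 2)⁻¹ *
          ((ell n (a + k - j) k ^ 2)⁻¹ * ((ell n i (a - 2) ^ 2)⁻¹ *
          ell n i (a + k - j - 2) ^ 2))) := by
            rw [swap_head (xBD.inv_left.inv_right.symm) _]
      _ = ell n (a + k - j) k ^ 2 * ((ell n (a + k - j) k ^ 2)⁻¹ *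
          ((ell n a (a + k - j - 2) ^ 2)⁻¹ * ((ell n i (a - 2) ^ 2)⁻¹ *
          ell n i (a + k - j - 2) ^ 2))) := by
            rw [swap_head (xBE.inv_left.inv_right.symm) _]
      _ = (ell n a (a + k - j - 2) ^ 2)⁻¹ * ((ell n i (a - 2) ^ 2)⁻¹ *
          ell n i (a + k - j - 2) ^ 2) := by
            rw [mul_inv_cancel_left]
      _ = (ell n a (a + k - j - 2) ^ 2)⁻¹ * (ell n i (a + k - j - 2) ^ 2 *
          (ell n i (a - 2) ^ 2)⁻¹) := by
            rw [(xCD.inv_right.symm).eq]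
      _ = ell n i (a + k - j - 2) ^ 2 * (ell n i (a - 2) ^ 2)⁻¹ *
          (ell n a (a + k - j - 2) ^ 2)⁻¹ := by
            rw [← mul_assoc, (xCE.inv_right.symm).eq, mul_assoc,
              (xDE.symm.inv_left.inv_right).eq, ← mul_assoc]
  -- conclude
  have key : ell n a k * ((ell n a k ^ 2)⁻¹ * ell n a j ^ 2 * ell n i k ^ 2 *
      (ell n i j ^ 2)⁻¹) * ell n a k =
      (ell n i (a + k - j - 2) ^ 2 * (ell n i (a - 2) ^ 2)⁻¹ *
        (ell n a (a + k - j - 2) ^ 2)⁻¹ * ell n a k) * ell n a k := by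
    calc ell n a k * ((ell n a k ^ 2)⁻¹ * ell n a j ^ 2 * ell n i k ^ 2 *
        (ell n i j ^ 2)⁻¹) * ell n a k
        = ell n a k * (ell n a k ^ 2)⁻¹ * ell n a j ^ 2 * ell n i k ^ 2 *
          ((ell n i j ^ 2)⁻¹ * ell n a k) := by group
      _ = ell n a k * (ell n a k ^ 2)⁻¹ * ell n a j ^ 2 * ell n i k ^ 2 *
          (ell n a k * ((ell n i k ^ 2 * ell n (a + k - j) k ^ 2 *
          (ell n i (a + k - j - 2) ^ 2)⁻¹ * ell n i (a - 2) ^ 2 *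
          ell n a (a + k - j - 2) ^ 2)⁻¹ * ell n a k ^ 2)) := by rw [hinv]
      _ = (ell n a k)⁻¹ * ell n a j ^ 2 * (ell n i k ^ 2 * ell n a k) *
          ((ell n i k ^ 2 * ell n (a + k - j) k ^ 2 *
          (ell n i (a + k - j - 2) ^ 2)⁻¹ * ell n i (a - 2) ^ 2 *
          ell n a (a + k - j - 2) ^ 2)⁻¹ * ell n a k ^ 2) := by
          rw [show ell n a k * (ell n a k ^ 2)⁻¹ = (ell n a k)⁻¹ from by
            rw [pow_two]; group]
          group
      _ = (ell n a k)⁻¹ * ell n a j ^ 2 * (ell n a k * ell n i k ^ 2) *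
          ((ell n i k ^ 2 * ell n (a + k - j) k ^ 2 *
          (ell n i (a + k - j - 2) ^ 2)⁻¹ * ell n i (a - 2) ^ 2 *
          ell n a (a + k - j - 2) ^ 2)⁻¹ * ell n a k ^ 2) := by
          rw [← cik.eq]
      _ = (ell n (a + k - j) k ^ 2 * ell n i k ^ 2) *
          ((ell n i k ^ 2 * ell n (a + k - j) k ^ 2 *
          (ell n i (a + k - j - 2) ^ 2)⁻¹ * ell n i (a - 2) ^ 2 *
          ell n a (a + k - j - 2) ^ 2)⁻¹ * ell n a k ^ 2) := by
          rw [show (ell n a k)⁻¹ * ell n a j ^ 2 * (ell n a k * ell n i k ^ 2) =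
            ((ell n a k)⁻¹ * ell n a j ^ 2 * ell n a k) * ell n i k ^ 2 from by group,
            conj1]
      _ = (ell n (a + k - j) k ^ 2 * ell n i k ^ 2 *
          (ell n i k ^ 2 * ell n (a + k - j) k ^ 2 *
          (ell n i (a + k - j - 2) ^ 2)⁻¹ * ell n i (a - 2) ^ 2 *
          ell n a (a + k - j - 2) ^ 2)⁻¹) * ell n a k ^ 2 := by group
      _ = (ell n i (a + k - j - 2) ^ 2 * (ell n i (a - 2) ^ 2)⁻¹ *
          (ell n a (a + k - j - 2) ^ 2)⁻¹) * ell n a k ^ 2 := by rw [hMT]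
      _ = (ell n i (a + k - j - 2) ^ 2 * (ell n i (a - 2) ^ 2)⁻¹ *
          (ell n a (a + k - j - 2) ^ 2)⁻¹ * ell n a k) * ell n a k := by
          simp only [pow_two]; group
  exact mul_right_cancel key
/-! ### Generic versions for the mirrored side -/

lemma MT_generic {G : Type*} [Group G] {A B C D E : G}
    (xAB : Commute A B) (xAC : Commute A C) (xAD : Commute A D) (xAE : Commute A E)
    (xBC : Commute B C) (xBD : Commute B D) (xBE : Commute B E)
    (xCD : Commute C D) (xCE : Commute C E) (xDE : Commute D E) :
    B * A * (A * B * C⁻¹ * D * E)⁻¹ = C * D⁻¹ * E⁻¹ := by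
  rw [show (A * B * C⁻¹ * D * E)⁻¹ = E⁻¹ * (D⁻¹ * (C * (B⁻¹ * A⁻¹))) from by group]
  calc B * A * (E⁻¹ * (D⁻¹ * (C * (B⁻¹ * A⁻¹))))
      = B * A * (E⁻¹ * (D⁻¹ * (C * (A⁻¹ * B⁻¹)))) := by
        rw [(xAB.symm.inv_left.inv_right).eq]
    _ = B * A * (E⁻¹ * (D⁻¹ * (A⁻¹ * (C * B⁻¹)))) := by
        rw [swap_head (xAC.symm.inv_right) _]
    _ = B * A * (E⁻¹ * (A⁻¹ * (D⁻¹ * (C * B⁻¹)))) := by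
        rw [swap_head (xAD.inv_left.inv_right.symm) _]
    _ = B * A * (A⁻¹ * (E⁻¹ * (D⁻¹ * (C * B⁻¹)))) := by
        rw [swap_head (xAE.inv_left.inv_right.symm) _]
    _ = B * (E⁻¹ * (D⁻¹ * (C * B⁻¹))) := by group
    _ = B * (E⁻¹ * (D⁻¹ * (B⁻¹ * C))) := by rw [(xBC.symm.inv_right).eq]
    _ = B * (E⁻¹ * (B⁻¹ * (D⁻¹ * C))) := by rw [swap_head (xBD.inv_left.inv_right.symm) _]
    _ = B * (B⁻¹ * (E⁻¹ * (D⁻¹ * C))) := by rw [swap_head (xBE.inv_left.inv_right.symm) _]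
    _ = E⁻¹ * (D⁻¹ * C) := by group
    _ = E⁻¹ * (C * D⁻¹) := by rw [(xCD.symm.inv_left).eq]
    _ = C * (E⁻¹ * D⁻¹) := by rw [swap_head (xCE.symm.inv_left) _]
    _ = C * (D⁻¹ * E⁻¹) := by rw [(xDE.symm.inv_left.inv_right).eq]
    _ = C * D⁻¹ * E⁻¹ := by group

lemma cm_generic {G : Type*} [Group G] {F A B C D E T U : G}
    (hO : F * U * F = A * B * C⁻¹ * D * E)
    (hflip : F * T = B * F)
    (hA : Commute F A)
    (h2B : Commute (F * F) B)
    (xAB : Commute A B) (xAC : Commute A C) (xAD : Commute A D) (xAE : Commute A E)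
    (xBC : Commute B C) (xBD : Commute B D) (xBE : Commute B E)
    (xCD : Commute C D) (xCE : Commute C E) (xDE : Commute D E) :
    F * ((F * F)⁻¹ * T * A * U⁻¹) = C * D⁻¹ * E⁻¹ * F := by
  apply mul_right_cancel (b := F)
  have conj : F⁻¹ * T * F = B := by
    have hT : T = F⁻¹ * (B * F) := by rw [← hflip]; group
    calc F⁻¹ * T * F = (F * F)⁻¹ * (B * (F * F)) := by rw [hT]; group
      _ = B := by rw [← h2B.eq, inv_mul_cancel_left]
  have hU : U⁻¹ * F = F * ((A * B * C⁻¹ * D * E)⁻¹ * (F * F)) := by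
    have h' : U = F⁻¹ * (A * B * C⁻¹ * D * E * F⁻¹) := by rw [← hO]; group
    rw [h']; group
  have hMT := MT_generic xAB xAC xAD xAE xBC xBD xBE xCD xCE xDE
  calc F * ((F * F)⁻¹ * T * A * U⁻¹) * F
      = F * (F * F)⁻¹ * T * A * (U⁻¹ * F) := by group
    _ = F * (F * F)⁻¹ * T * A * (F * ((A * B * C⁻¹ * D * E)⁻¹ * (F * F))) := by rw [hU]
    _ = F⁻¹ * T * (A * F) * ((A * B * C⁻¹ * D * E)⁻¹ * (F * F)) := by
        rw [show F * (F * F)⁻¹ = F⁻¹ from by group]; group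
    _ = F⁻¹ * T * (F * A) * ((A * B * C⁻¹ * D * E)⁻¹ * (F * F)) := by rw [← hA.eq]
    _ = (F⁻¹ * T * F) * (A * ((A * B * C⁻¹ * D * E)⁻¹ * (F * F))) := by group
    _ = B * (A * ((A * B * C⁻¹ * D * E)⁻¹ * (F * F))) := by rw [conj]
    _ = (B * A * (A * B * C⁻¹ * D * E)⁻¹) * (F * F) := by group
    _ = C * D⁻¹ * E⁻¹ * (F * F) := by rw [hMT]
    _ = C * D⁻¹ * E⁻¹ * F * F := by group

lemma C2m {a j k p : ℕ} (ha : 1 ≤ a) (haj : a ≤ j + 1) (hjk : j + 1 ≤ k) (hkp : k < p)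
    (hpn : p ≤ n) :
    ell n a k * ((ell n a k ^ 2)⁻¹ * ell n (j + 2) k ^ 2 * ell n a p ^ 2 *
      (ell n (j + 2) p ^ 2)⁻¹) =
    ell n (a + k - j) p ^ 2 * (ell n (a + k - j) k ^ 2)⁻¹ * (ell n (k + 2) p ^ 2)⁻¹ *
      ell n a k := by
  have hO := OVR (n := n) ha haj hjk hkp hpn
  have hflip : ell n a k * ell n (j + 2) k ^ 2 = ell n a (a + k - j - 2) ^ 2 * ell n a k := by
    have := ell_flip_sq (n := n) (x := a) (z := k) (u := j + 2) (v := k) (by omega)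
      (by omega) (by omega) le_rfl (by omega)
    rwa [show a + k - k = a by omega, show a + k - (j + 2) = a + k - j - 2 by omega] at this
  have hA : Commute (ell n a k) (ell n a p ^ 2) :=
    (sq_ell_comm_ell ha hpn le_rfl (by omega)).symm
  have h2B : Commute (ell n a k * ell n a k) (ell n a (a + k - j - 2) ^ 2) := by
    rw [← pow_two]
    exact comm_sq_sq_nested ha (by omega) le_rfl (by omega)
  have yAB : Commute (ell n a p ^ 2) (ell n a (a + k - j - 2) ^ 2) :=
    comm_sq_sq_nested ha hpn le_rfl (by omega)
  have yAC : Commute (ell n a p ^ 2) (ell n (a + k - j) p ^ 2) :=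
    comm_sq_sq_nested ha hpn (by omega) le_rfl
  have yAD : Commute (ell n a p ^ 2) (ell n (a + k - j) k ^ 2) :=
    comm_sq_sq_nested ha hpn (by omega) (by omega)
  have yAE : Commute (ell n a p ^ 2) (ell n (k + 2) p ^ 2) :=
    comm_sq_sq_nested ha hpn (by omega) le_rfl
  have yBC : Commute (ell n a (a + k - j - 2) ^ 2) (ell n (a + k - j) p ^ 2) :=
    comm_sq_sq_far (by omega)
  have yBD : Commute (ell n a (a + k - j - 2) ^ 2) (ell n (a + k - j) k ^ 2) :=
    comm_sq_sq_far (by omega)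
  have yBE : Commute (ell n a (a + k - j - 2) ^ 2) (ell n (k + 2) p ^ 2) :=
    comm_sq_sq_far (by omega)
  have yCD : Commute (ell n (a + k - j) p ^ 2) (ell n (a + k - j) k ^ 2) := by
    by_cases hm : a + k - j ≤ p
    · exact comm_sq_sq_nested (by omega) hpn le_rfl (by omega)
    · rw [ell_empty (i := a + k - j) (j := p) (by omega)]
      simp
  have yCE : Commute (ell n (a + k - j) p ^ 2) (ell n (k + 2) p ^ 2) := by
    by_cases hm : a + k - j ≤ p
    · exact comm_sq_sq_nested (by omega) hpn (by omega) le_rfl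
    · rw [ell_empty (i := a + k - j) (j := p) (by omega)]
      simp
  have yDE : Commute (ell n (a + k - j) k ^ 2) (ell n (k + 2) p ^ 2) :=
    comm_sq_sq_far (by omega)
  have hgen := cm_generic (F := ell n a k) (A := ell n a p ^ 2)
    (B := ell n a (a + k - j - 2) ^ 2) (C := ell n (a + k - j) p ^ 2)
    (D := ell n (a + k - j) k ^ 2) (E := ell n (k + 2) p ^ 2)
    (T := ell n (j + 2) k ^ 2) (U := ell n (j + 2) p ^ 2)
    hO hflip hA h2B yAB yAC yAD yAE yBC yBD yBE yCD yCE yDE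
  rw [show ell n a k ^ 2 = ell n a k * ell n a k from pow_two _]
  exact hgen

/-! ### The key commutation -/

lemma KC {i a j k p : ℕ} (hi : 1 ≤ i) (hia : i < a) (haj : a ≤ j + 1) (hjk : j + 1 ≤ k)
    (hkp : k < p) (hpn : p ≤ n) :
    Commute
      ((ell n a k ^ 2)⁻¹ * ell n a j ^ 2 * ell n i k ^ 2 * (ell n i j ^ 2)⁻¹)
      ((ell n a k ^ 2)⁻¹ * ell n (j + 2) k ^ 2 * ell n a p ^ 2 * (ell n (j + 2) p ^ 2)⁻¹) := by
  have h1 := C1m (n := n) hi hia haj hjk (by omega)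
  have h2 := C2m (n := n) (by omega) haj hjk hkp hpn
  have hc : (ell n a k ^ 2)⁻¹ * ell n a j ^ 2 * ell n i k ^ 2 * (ell n i j ^ 2)⁻¹ =
      (ell n a k)⁻¹ * (ell n i (a + k - j - 2) ^ 2 * (ell n i (a - 2) ^ 2)⁻¹ *
        (ell n a (a + k - j - 2) ^ 2)⁻¹ * ell n a k) := by
    rw [← h1]; group
  have hd : (ell n a k ^ 2)⁻¹ * ell n (j + 2) k ^ 2 * ell n a p ^ 2 *
      (ell n (j + 2) p ^ 2)⁻¹ =
      (ell n a k)⁻¹ * (ell n (a + k - j) p ^ 2 * (ell n (a + k - j) k ^ 2)⁻¹ *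
        (ell n (k + 2) p ^ 2)⁻¹ * ell n a k) := by
    rw [← h2]; group
  have z1 : Commute (ell n i (a + k - j - 2) ^ 2) (ell n (a + k - j) p ^ 2) :=
    comm_sq_sq_far (by omega)
  have z2 : Commute (ell n i (a + k - j - 2) ^ 2) (ell n (a + k - j) k ^ 2) :=
    comm_sq_sq_far (by omega)
  have z3 : Commute (ell n i (a + k - j - 2) ^ 2) (ell n (k + 2) p ^ 2) :=
    comm_sq_sq_far (by omega)
  have z4 : Commute (ell n i (a - 2) ^ 2) (ell n (a + k - j) p ^ 2) :=
    comm_sq_sq_far (by omega)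
  have z5 : Commute (ell n i (a - 2) ^ 2) (ell n (a + k - j) k ^ 2) :=
    comm_sq_sq_far (by omega)
  have z6 : Commute (ell n i (a - 2) ^ 2) (ell n (k + 2) p ^ 2) :=
    comm_sq_sq_far (by omega)
  have z7 : Commute (ell n a (a + k - j - 2) ^ 2) (ell n (a + k - j) p ^ 2) :=
    comm_sq_sq_far (by omega)
  have z8 : Commute (ell n a (a + k - j - 2) ^ 2) (ell n (a + k - j) k ^ 2) :=
    comm_sq_sq_far (by omega)
  have z9 : Commute (ell n a (a + k - j - 2) ^ 2) (ell n (k + 2) p ^ 2) :=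
    comm_sq_sq_far (by omega)
  have hTc : Commute
      (ell n i (a + k - j - 2) ^ 2 * (ell n i (a - 2) ^ 2)⁻¹ *
        (ell n a (a + k - j - 2) ^ 2)⁻¹)
      (ell n (a + k - j) p ^ 2 * (ell n (a + k - j) k ^ 2)⁻¹ *
        (ell n (k + 2) p ^ 2)⁻¹) := by
    apply Commute.mul_left
    apply Commute.mul_left
    · exact (z1.mul_right z2.inv_right).mul_right z3.inv_right
    · exact ((z4.mul_right z5.inv_right).mul_right z6.inv_right).inv_left
    · exact ((z7.mul_right z8.inv_right).mul_right z9.inv_right).inv_left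
  unfold Commute SemiconjBy
  rw [hc, hd]
  calc (ell n a k)⁻¹ * (ell n i (a + k - j - 2) ^ 2 * (ell n i (a - 2) ^ 2)⁻¹ *
        (ell n a (a + k - j - 2) ^ 2)⁻¹ * ell n a k) *
      ((ell n a k)⁻¹ * (ell n (a + k - j) p ^ 2 * (ell n (a + k - j) k ^ 2)⁻¹ *
        (ell n (k + 2) p ^ 2)⁻¹ * ell n a k))
      = (ell n a k)⁻¹ * ((ell n i (a + k - j - 2) ^ 2 * (ell n i (a - 2) ^ 2)⁻¹ *
        (ell n a (a + k - j - 2) ^ 2)⁻¹) * (ell n (a + k - j) p ^ 2 *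
        (ell n (a + k - j) k ^ 2)⁻¹ * (ell n (k + 2) p ^ 2)⁻¹)) * ell n a k := by group
    _ = (ell n a k)⁻¹ * ((ell n (a + k - j) p ^ 2 * (ell n (a + k - j) k ^ 2)⁻¹ *
        (ell n (k + 2) p ^ 2)⁻¹) * (ell n i (a + k - j - 2) ^ 2 *
        (ell n i (a - 2) ^ 2)⁻¹ * (ell n a (a + k - j - 2) ^ 2)⁻¹)) * ell n a k := by
          rw [hTc.eq]
    _ = (ell n a k)⁻¹ * (ell n (a + k - j) p ^ 2 * (ell n (a + k - j) k ^ 2)⁻¹ *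
        (ell n (k + 2) p ^ 2)⁻¹ * ell n a k) *
        ((ell n a k)⁻¹ * (ell n i (a + k - j - 2) ^ 2 * (ell n i (a - 2) ^ 2)⁻¹ *
        (ell n a (a + k - j - 2) ^ 2)⁻¹ * ell n a k)) := by group
/-- The box relation:
`ℓ_{i,k}⁻² ℓ_{i,j}² ℓ_{a,k}² ℓ_{j+2,p}² ℓ_{a,p}⁻² = ℓ_{a,p}⁻² ℓ_{j+2,p}² ℓ_{a,k}² ℓ_{i,j}² ℓ_{i,k}⁻²`
whenever `1 ≤ i < a ≤ j+1 ≤ k < p ≤ n`. -/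
theorem box_relation (n i a j k p : ℕ) (hi : 1 ≤ i) (hia : i < a) (haj : a ≤ j + 1)
    (hjk : j + 1 ≤ k) (hkp : k < p) (hp : p ≤ n) :
    ((ell n i k) ^ 2)⁻¹ * (ell n i j) ^ 2 * (ell n a k) ^ 2 * (ell n (j + 2) p) ^ 2 *
        ((ell n a p) ^ 2)⁻¹ =
      ((ell n a p) ^ 2)⁻¹ * (ell n (j + 2) p) ^ 2 * (ell n a k) ^ 2 * (ell n i j) ^ 2 *
        ((ell n i k) ^ 2)⁻¹ := by
  have hkn : k ≤ n := by omega
  have ha1 : 1 ≤ a := by omega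
  have hKC := KC (n := n) hi hia haj hjk hkp hp
  have q1 : Commute (ell n a k ^ 2) (ell n (j + 2) k ^ 2) :=
    comm_sq_sq_nested ha1 hkn (by omega) le_rfl
  have q2 : Commute (ell n a k ^ 2) (ell n a j ^ 2) :=
    comm_sq_sq_nested ha1 hkn le_rfl (by omega)
  have q3 : Commute (ell n a j ^ 2) ((ell n a p ^ 2)⁻¹) :=
    (comm_sq_sq_nested ha1 hp le_rfl (by omega)).symm.inv_right
  have q4 : Commute (ell n (j + 2) p ^ 2) (ell n a j ^ 2) :=
    (comm_sq_sq_far (le_refl (j + 2))).symm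
  have q5 : Commute (ell n i j ^ 2) ((ell n i k ^ 2)⁻¹) :=
    (comm_sq_sq_nested hi hkn le_rfl (by omega)).symm.inv_right
  have q6 : Commute (ell n (j + 2) k ^ 2) (ell n a j ^ 2) :=
    (comm_sq_sq_far (le_refl (j + 2))).symm
  have q7 : Commute (ell n (j + 2) k ^ 2) ((ell n a k ^ 2)⁻¹) := q1.symm.inv_right
  have q8 : Commute ((ell n i k ^ 2)⁻¹) (ell n (j + 2) k ^ 2) :=
    (comm_sq_sq_nested hi hkn (by omega) le_rfl).inv_left
  have q9 : Commute (ell n i j ^ 2) (ell n (j + 2) k ^ 2) :=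
    comm_sq_sq_far (le_refl (j + 2))
  have q10 : Commute (ell n (j + 2) p ^ 2) ((ell n a p ^ 2)⁻¹) :=
    (comm_sq_sq_nested ha1 hp (by omega) le_rfl).symm.inv_right
  have h1 : ((ell n a k ^ 2)⁻¹ * ell n a j ^ 2 * ell n i k ^ 2 * (ell n i j ^ 2)⁻¹)⁻¹ *
      ((ell n a k ^ 2)⁻¹ * ell n (j + 2) k ^ 2 * ell n a p ^ 2 * (ell n (j + 2) p ^ 2)⁻¹)⁻¹ *
      (ell n a k ^ 2 * (ell n a j ^ 2)⁻¹ * (ell n (j + 2) k ^ 2)⁻¹)⁻¹ =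
      (ell n i k ^ 2)⁻¹ * ell n i j ^ 2 * ell n a k ^ 2 * ell n (j + 2) p ^ 2 *
        (ell n a p ^ 2)⁻¹ := by
    calc ((ell n a k ^ 2)⁻¹ * ell n a j ^ 2 * ell n i k ^ 2 * (ell n i j ^ 2)⁻¹)⁻¹ *
        ((ell n a k ^ 2)⁻¹ * ell n (j + 2) k ^ 2 * ell n a p ^ 2 *
          (ell n (j + 2) p ^ 2)⁻¹)⁻¹ *
        (ell n a k ^ 2 * (ell n a j ^ 2)⁻¹ * (ell n (j + 2) k ^ 2)⁻¹)⁻¹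
        = ell n i j ^ 2 * ((ell n i k ^ 2)⁻¹ * ((ell n a j ^ 2)⁻¹ * (ell n a k ^ 2 *
          (ell n (j + 2) p ^ 2 * ((ell n a p ^ 2)⁻¹ * ((ell n (j + 2) k ^ 2)⁻¹ *
          (ell n a k ^ 2 * (ell n (j + 2) k ^ 2 * (ell n a j ^ 2 *
          (ell n a k ^ 2)⁻¹))))))))) := by group
      _ = ell n i j ^ 2 * ((ell n i k ^ 2)⁻¹ * ((ell n a j ^ 2)⁻¹ * (ell n a k ^ 2 *
          (ell n (j + 2) p ^ 2 * ((ell n a p ^ 2)⁻¹ * ((ell n (j + 2) k ^ 2)⁻¹ *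
          (ell n (j + 2) k ^ 2 * (ell n a k ^ 2 * (ell n a j ^ 2 *
          (ell n a k ^ 2)⁻¹))))))))) := by rw [swap_head q1 _]
      _ = ell n i j ^ 2 * ((ell n i k ^ 2)⁻¹ * ((ell n a j ^ 2)⁻¹ * (ell n a k ^ 2 *
          (ell n (j + 2) p ^ 2 * ((ell n a p ^ 2)⁻¹ * (ell n a k ^ 2 *
          (ell n a j ^ 2 * (ell n a k ^ 2)⁻¹))))))) := by rw [inv_mul_cancel_left]
      _ = ell n i j ^ 2 * ((ell n i k ^ 2)⁻¹ * ((ell n a j ^ 2)⁻¹ * (ell n a k ^ 2 *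
          (ell n (j + 2) p ^ 2 * ((ell n a p ^ 2)⁻¹ * (ell n a j ^ 2 *
          (ell n a k ^ 2 * (ell n a k ^ 2)⁻¹))))))) := by rw [swap_head q2 _]
      _ = ell n i j ^ 2 * ((ell n i k ^ 2)⁻¹ * ((ell n a j ^ 2)⁻¹ * (ell n a k ^ 2 *
          (ell n (j + 2) p ^ 2 * ((ell n a p ^ 2)⁻¹ * ell n a j ^ 2))))) := by
            rw [mul_inv_cancel, mul_one]
      _ = ell n i j ^ 2 * ((ell n i k ^ 2)⁻¹ * ((ell n a j ^ 2)⁻¹ * (ell n a k ^ 2 *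
          (ell n (j + 2) p ^ 2 * (ell n a j ^ 2 * (ell n a p ^ 2)⁻¹))))) := by
            rw [q3.symm.eq]
      _ = ell n i j ^ 2 * ((ell n i k ^ 2)⁻¹ * ((ell n a j ^ 2)⁻¹ * (ell n a k ^ 2 *
          (ell n a j ^ 2 * (ell n (j + 2) p ^ 2 * (ell n a p ^ 2)⁻¹))))) := by
            rw [swap_head q4 _]
      _ = ell n i j ^ 2 * ((ell n i k ^ 2)⁻¹ * ((ell n a j ^ 2)⁻¹ * (ell n a j ^ 2 *
          (ell n a k ^ 2 * (ell n (j + 2) p ^ 2 * (ell n a p ^ 2)⁻¹))))) := by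
            rw [swap_head q2 _]
      _ = ell n i j ^ 2 * ((ell n i k ^ 2)⁻¹ * (ell n a k ^ 2 *
          (ell n (j + 2) p ^ 2 * (ell n a p ^ 2)⁻¹))) := by rw [inv_mul_cancel_left]
      _ = (ell n i k ^ 2)⁻¹ * (ell n i j ^ 2 * (ell n a k ^ 2 *
          (ell n (j + 2) p ^ 2 * (ell n a p ^ 2)⁻¹))) := by rw [swap_head q5 _]
      _ = (ell n i k ^ 2)⁻¹ * ell n i j ^ 2 * ell n a k ^ 2 * ell n (j + 2) p ^ 2 *
          (ell n a p ^ 2)⁻¹ := by group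
  have h2 : ((ell n a k ^ 2)⁻¹ * ell n (j + 2) k ^ 2 * ell n a p ^ 2 *
      (ell n (j + 2) p ^ 2)⁻¹)⁻¹ *
      ((ell n a k ^ 2)⁻¹ * ell n a j ^ 2 * ell n i k ^ 2 * (ell n i j ^ 2)⁻¹)⁻¹ *
      (ell n a k ^ 2 * (ell n a j ^ 2)⁻¹ * (ell n (j + 2) k ^ 2)⁻¹)⁻¹ =
      (ell n a p ^ 2)⁻¹ * ell n (j + 2) p ^ 2 * ell n a k ^ 2 * ell n i j ^ 2 *
        (ell n i k ^ 2)⁻¹ := by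
    calc ((ell n a k ^ 2)⁻¹ * ell n (j + 2) k ^ 2 * ell n a p ^ 2 *
        (ell n (j + 2) p ^ 2)⁻¹)⁻¹ *
        ((ell n a k ^ 2)⁻¹ * ell n a j ^ 2 * ell n i k ^ 2 * (ell n i j ^ 2)⁻¹)⁻¹ *
        (ell n a k ^ 2 * (ell n a j ^ 2)⁻¹ * (ell n (j + 2) k ^ 2)⁻¹)⁻¹
        = ell n (j + 2) p ^ 2 * ((ell n a p ^ 2)⁻¹ * ((ell n (j + 2) k ^ 2)⁻¹ *
          (ell n a k ^ 2 * (ell n i j ^ 2 * ((ell n i k ^ 2)⁻¹ * ((ell n a j ^ 2)⁻¹ *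
          (ell n a k ^ 2 * (ell n (j + 2) k ^ 2 * (ell n a j ^ 2 *
          (ell n a k ^ 2)⁻¹))))))))) := by group
      _ = ell n (j + 2) p ^ 2 * ((ell n a p ^ 2)⁻¹ * ((ell n (j + 2) k ^ 2)⁻¹ *
          (ell n a k ^ 2 * (ell n i j ^ 2 * ((ell n i k ^ 2)⁻¹ * ((ell n a j ^ 2)⁻¹ *
          (ell n a k ^ 2 * (ell n a j ^ 2 * ((ell n (j + 2) k ^ 2) *
          (ell n a k ^ 2)⁻¹))))))))) := by rw [swap_head q6 _]
      _ = ell n (j + 2) p ^ 2 * ((ell n a p ^ 2)⁻¹ * ((ell n (j + 2) k ^ 2)⁻¹ *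
          (ell n a k ^ 2 * (ell n i j ^ 2 * ((ell n i k ^ 2)⁻¹ * ((ell n a j ^ 2)⁻¹ *
          (ell n a k ^ 2 * (ell n a j ^ 2 * ((ell n a k ^ 2)⁻¹ *
          ell n (j + 2) k ^ 2))))))))) := by rw [q7.eq]
      _ = ell n (j + 2) p ^ 2 * ((ell n a p ^ 2)⁻¹ * ((ell n (j + 2) k ^ 2)⁻¹ *
          (ell n a k ^ 2 * (ell n i j ^ 2 * ((ell n i k ^ 2)⁻¹ * ((ell n a j ^ 2)⁻¹ *
          (ell n a j ^ 2 * (ell n a k ^ 2 * ((ell n a k ^ 2)⁻¹ *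
          ell n (j + 2) k ^ 2))))))))) := by rw [swap_head q2 _]
      _ = ell n (j + 2) p ^ 2 * ((ell n a p ^ 2)⁻¹ * ((ell n (j + 2) k ^ 2)⁻¹ *
          (ell n a k ^ 2 * (ell n i j ^ 2 * ((ell n i k ^ 2)⁻¹ *
          ell n (j + 2) k ^ 2))))) := by rw [inv_mul_cancel_left, mul_inv_cancel_left]
      _ = ell n (j + 2) p ^ 2 * ((ell n a p ^ 2)⁻¹ * ((ell n (j + 2) k ^ 2)⁻¹ *
          (ell n a k ^ 2 * (ell n i j ^ 2 * (ell n (j + 2) k ^ 2 *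
          (ell n i k ^ 2)⁻¹))))) := by rw [q8.eq]
      _ = ell n (j + 2) p ^ 2 * ((ell n a p ^ 2)⁻¹ * ((ell n (j + 2) k ^ 2)⁻¹ *
          (ell n a k ^ 2 * (ell n (j + 2) k ^ 2 * (ell n i j ^ 2 *
          (ell n i k ^ 2)⁻¹))))) := by rw [swap_head q9 _]
      _ = ell n (j + 2) p ^ 2 * ((ell n a p ^ 2)⁻¹ * ((ell n (j + 2) k ^ 2)⁻¹ *
          (ell n (j + 2) k ^ 2 * (ell n a k ^ 2 * (ell n i j ^ 2 *
          (ell n i k ^ 2)⁻¹))))) := by rw [swap_head q1 _]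
      _ = ell n (j + 2) p ^ 2 * ((ell n a p ^ 2)⁻¹ * (ell n a k ^ 2 *
          (ell n i j ^ 2 * (ell n i k ^ 2)⁻¹))) := by rw [inv_mul_cancel_left]
      _ = (ell n a p ^ 2)⁻¹ * (ell n (j + 2) p ^ 2 * (ell n a k ^ 2 *
          (ell n i j ^ 2 * (ell n i k ^ 2)⁻¹))) := by rw [swap_head q10 _]
      _ = (ell n a p ^ 2)⁻¹ * ell n (j + 2) p ^ 2 * ell n a k ^ 2 * ell n i j ^ 2 *
          (ell n i k ^ 2)⁻¹ := by group
  have h3 : ((ell n a k ^ 2)⁻¹ * ell n a j ^ 2 * ell n i k ^ 2 * (ell n i j ^ 2)⁻¹)⁻¹ *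
      ((ell n a k ^ 2)⁻¹ * ell n (j + 2) k ^ 2 * ell n a p ^ 2 *
        (ell n (j + 2) p ^ 2)⁻¹)⁻¹ =
      ((ell n a k ^ 2)⁻¹ * ell n (j + 2) k ^ 2 * ell n a p ^ 2 *
        (ell n (j + 2) p ^ 2)⁻¹)⁻¹ *
      ((ell n a k ^ 2)⁻¹ * ell n a j ^ 2 * ell n i k ^ 2 * (ell n i j ^ 2)⁻¹)⁻¹ := by
    rw [← mul_inv_rev, ← mul_inv_rev, hKC.eq]
  calc (ell n i k ^ 2)⁻¹ * ell n i j ^ 2 * ell n a k ^ 2 * ell n (j + 2) p ^ 2 *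
      (ell n a p ^ 2)⁻¹
      = ((ell n a k ^ 2)⁻¹ * ell n a j ^ 2 * ell n i k ^ 2 * (ell n i j ^ 2)⁻¹)⁻¹ *
        ((ell n a k ^ 2)⁻¹ * ell n (j + 2) k ^ 2 * ell n a p ^ 2 *
          (ell n (j + 2) p ^ 2)⁻¹)⁻¹ *
        (ell n a k ^ 2 * (ell n a j ^ 2)⁻¹ * (ell n (j + 2) k ^ 2)⁻¹)⁻¹ := h1.symm
    _ = ((ell n a k ^ 2)⁻¹ * ell n (j + 2) k ^ 2 * ell n a p ^ 2 *
          (ell n (j + 2) p ^ 2)⁻¹)⁻¹ *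
        ((ell n a k ^ 2)⁻¹ * ell n a j ^ 2 * ell n i k ^ 2 * (ell n i j ^ 2)⁻¹)⁻¹ *
        (ell n a k ^ 2 * (ell n a j ^ 2)⁻¹ * (ell n (j + 2) k ^ 2)⁻¹)⁻¹ := by rw [h3]
    _ = (ell n a p ^ 2)⁻¹ * ell n (j + 2) p ^ 2 * ell n a k ^ 2 * ell n i j ^ 2 *
        (ell n i k ^ 2)⁻¹ := h2

end BraidPaper
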